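/- arXiv:2107.04113 — 5 statements merged into one kernel-verified Lean document; each statement's English description precedes it below -/
import Mathlib

section
/- Let d ≥ 2 and let α, β be polynomials with complex coefficients in the d² entries of a d×d matrix. Suppose β(Y) ≠ 0 for every Y ∈ SL_d(ℤ), and that the function M ↦ α(M)/β(M) is non-constant on the set {M ∈ SL_d(ℂ) : β(M) ≠ 0}. Then there exist Y ∈ SL_d(ℤ) and a nilpotent matrix B ∈ Mat_d(ℤ) such that the function ℤ → ℂ given by k ↦ α(Y·(I + kB))/β(Y·(I + kB)) is non-constant (note Y·(I + kB) ∈ SL_d(ℤ) since B is nilpotent, so the denominator is nonzero). -/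
open Matrix

/-- Evaluation of a polynomial in the `d²` entries of a `d×d` matrix. -/
noncomputable def matEval {d : ℕ} {R : Type*} [CommSemiring R]
    (f : MvPolynomial (Fin d × Fin d) R) (M : Matrix (Fin d) (Fin d) R) : R :=
  MvPolynomial.eval (fun q : Fin d × Fin d => M q.1 q.2) f


open Matrix.Pivot

section Aux

lemma w_eq {d : ℕ} (i j : Fin d) (hij : i ≠ j) (t : ℂ) (ht : t ≠ 0) :
    transvection i j t * transvection j i (-t⁻¹) * transvection i j t =
      1 - Matrix.single i i 1 - Matrix.single j j 1
        + Matrix.single i j t + Matrix.single j i (-t⁻¹) := by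
  have hji := hij.symm
  simp only [transvection]
  noncomm_ring
  simp [single_mul_single_same, single_mul_single_of_ne, hij, hji, ht]
  ext a b
  simp only [Matrix.add_apply, Matrix.neg_apply, Matrix.single, of_apply, one_apply]
  split_ifs <;> first | ring | (exfalso; simp_all)

set_option maxHeartbeats 2000000 in
lemma pair_diag {d : ℕ} (i j : Fin d) (hij : i ≠ j) (t : ℂ) (ht : t ≠ 0) :
    transvection i j t * transvection j i (-t⁻¹) * transvection i j t *
      (transvection i j (-1) * transvection j i 1 * transvection i j (-1)) =
    diagonal (fun m => if m = i then t else if m = j then t⁻¹ else 1) := by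
  have hji := hij.symm
  have h2 : transvection i j (-1 : ℂ) * transvection j i 1 * transvection i j (-1) =
      1 - Matrix.single i i 1 - Matrix.single j j 1
        + Matrix.single i j (-1) + Matrix.single j i 1 := by
    have := w_eq i j hij (-1) (by norm_num)
    simpa [inv_neg] using this
  rw [w_eq i j hij t ht, h2]
  clear h2
  noncomm_ring
  simp [single_mul_single_same, single_mul_single_of_ne, hij, hji]
  ext a b
  by_cases hai : a = i <;> by_cases haj : a = j <;> by_cases hbi : b = i <;> by_cases hbj : b = j <;>
    simp_all [Matrix.single, diagonal_apply, one_apply, @eq_comm (Fin d)] <;> (try field_simp) <;>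
    (try ring)

lemma pair_diag_list {d : ℕ} (i j : Fin d) (hij : i ≠ j) (t : ℂ) (ht : t ≠ 0) :
    ∃ L : List (TransvectionStruct (Fin d) ℂ),
      (L.map TransvectionStruct.toMatrix).prod =
        diagonal (fun m => if m = i then t else if m = j then t⁻¹ else 1) := by
  refine ⟨[⟨i, j, hij, t⟩, ⟨j, i, hij.symm, -t⁻¹⟩, ⟨i, j, hij, t⟩, ⟨i, j, hij, -1⟩,
    ⟨j, i, hij.symm, 1⟩, ⟨i, j, hij, -1⟩], ?_⟩
  rw [← pair_diag i j hij t ht]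
  simp [TransvectionStruct.toMatrix_mk, Matrix.mul_assoc]

lemma diag_prod_transvec {d : ℕ} (a : Fin d → ℂ) (ha : ∏ m, a m = 1) :
    ∃ L : List (TransvectionStruct (Fin d) ℂ),
      (L.map TransvectionStruct.toMatrix).prod = diagonal a := by
  have hne : ∀ b : Fin d → ℂ, ∏ m, b m = 1 → ∀ m, b m ≠ 0 := by
    intro b hb m hm
    rw [Finset.prod_eq_zero (Finset.mem_univ m) hm] at hb
    exact one_ne_zero hb.symm
  have key : ∀ k : ℕ, k ≤ d → ∀ a : Fin d → ℂ, ∏ m, a m = 1 →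
      (∀ m : Fin d, k ≤ (m : ℕ) → a m = 1) →
      ∃ L : List (TransvectionStruct (Fin d) ℂ),
        (L.map TransvectionStruct.toMatrix).prod = diagonal a := by
    intro k
    induction k with
    | zero =>
      intro _ a ha h1
      have : a = fun _ => 1 := funext fun m => h1 m (Nat.zero_le _)
      exact ⟨[], by simp [this]⟩
    | succ k ih =>
      intro hk a ha h1
      by_cases hk0 : k = 0
      · subst hk0
        have hd1 : 0 < d := by omega
        have h0 : ∀ b : Fin d, b ≠ ⟨0, hd1⟩ → a b = 1 := by
          intro b hb
          refine h1 b ?_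
          have : (b : ℕ) ≠ 0 := fun h => hb (Fin.ext h)
          omega
        have ha0 : a ⟨0, hd1⟩ = 1 := by
          rw [Finset.prod_eq_single ⟨0, hd1⟩ (fun b _ hb => h0 b hb)
            (fun h => absurd (Finset.mem_univ _) h)] at ha
          exact ha
        have : a = fun _ => 1 := by
          funext m
          by_cases hm : m = ⟨0, hd1⟩
          · rw [hm]; exact ha0
          · exact h0 m hm
        exact ⟨[], by simp [this]⟩
      · have hkd : k < d := by omega
        have hk1 : 1 ≤ k := Nat.one_le_iff_ne_zero.mpr hk0
        set i : Fin d := ⟨k - 1, by omega⟩ with hi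
        set j : Fin d := ⟨k, hkd⟩ with hj
        have hij : i ≠ j := by
          simp only [hi, hj, ne_eq, Fin.mk.injEq]
          omega
        have haj : a j ≠ 0 := hne a ha j
        set a' : Fin d → ℂ := Function.update (Function.update a j 1) i (a i * a j) with ha'def
        have ha' : ∏ m, a' m = 1 := by
          rw [ha'def, Finset.prod_update_of_mem (Finset.mem_univ i)]
          rw [Finset.sdiff_singleton_eq_erase,
            Finset.prod_update_of_mem (Finset.mem_erase.mpr ⟨hij.symm, Finset.mem_univ j⟩)]
          rw [Finset.sdiff_singleton_eq_erase, one_mul, mul_assoc]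
          rw [Finset.mul_prod_erase (Finset.univ.erase i) a
              (Finset.mem_erase.mpr ⟨hij.symm, Finset.mem_univ j⟩),
            Finset.mul_prod_erase Finset.univ a (Finset.mem_univ i)]
          exact ha
        have h1' : ∀ m : Fin d, k ≤ (m : ℕ) → a' m = 1 := by
          intro m hm
          have hmi : m ≠ i := by
            intro h
            rw [h] at hm
            simp only [hi] at hm
            omega
          by_cases hmj : m = j
          · rw [ha'def, Function.update_of_ne hmi, hmj, Function.update_self]
          · rw [ha'def, Function.update_of_ne hmi, Function.update_of_ne hmj]
            refine h1 m ?_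
            have : (m : ℕ) ≠ k := fun h => hmj (Fin.ext h)
            omega
        obtain ⟨L', hL'⟩ := ih (by omega) a' ha' h1'
        obtain ⟨Lp, hLp⟩ := pair_diag_list i j hij (a j)⁻¹ (inv_ne_zero haj)
        refine ⟨L' ++ Lp, ?_⟩
        have hfun : (fun m => a' m *
            (if m = i then (a j)⁻¹ else if m = j then ((a j)⁻¹)⁻¹ else 1)) = a := by
          funext m
          by_cases hmi : m = i
          · subst hmi
            rw [if_pos rfl, ha'def, Function.update_self]
            field_simp
          · by_cases hmj : m = j
            · subst hmj
              rw [if_neg hij.symm, if_pos rfl, ha'def, Function.update_of_ne hij.symm,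
                Function.update_self, inv_inv, one_mul]
            · rw [if_neg hmi, if_neg hmj, ha'def, Function.update_of_ne hmi,
                Function.update_of_ne hmj, mul_one]
        rw [List.map_append, List.prod_append, hL', hLp, diagonal_mul_diagonal, hfun]
  exact key d le_rfl a ha (fun m hm => absurd m.isLt (by omega))

lemma sl_transvec {d : ℕ} (N : Matrix (Fin d) (Fin d) ℂ) (hN : N.det = 1) :
    ∃ L : List (TransvectionStruct (Fin d) ℂ),
      N = (L.map TransvectionStruct.toMatrix).prod := by
  obtain ⟨L, L', D, h⟩ := exists_list_transvec_mul_diagonal_mul_list_transvec N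
  have hD : ∏ m, D m = 1 := by
    have := congrArg det h
    rw [hN, det_mul, det_mul, TransvectionStruct.det_toMatrix_prod,
      TransvectionStruct.det_toMatrix_prod, det_diagonal] at this
    simpa using this.symm
  obtain ⟨LD, hLD⟩ := diag_prod_transvec D hD
  refine ⟨L ++ (LD ++ L'), ?_⟩
  rw [h, List.map_append, List.prod_append, List.map_append, List.prod_append, hLD,
    Matrix.mul_assoc]


end Aux

/-- **Lemma (non-constancy along a unipotent direction).**
Let `d ≥ 2` and let `α, β` be complex polynomials in the entries of a `d×d` matrix with
`β(Y) ≠ 0` for all `Y ∈ SL_d(ℤ)`, such that `M ↦ α(M)/β(M)` is non-constant on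
`{M ∈ SL_d(ℂ) : β(M) ≠ 0}`.  Then there are `Y ∈ SL_d(ℤ)` and a nilpotent `B ∈ Mat_d(ℤ)` such
that `k ↦ α(Y(I + kB))/β(Y(I + kB))` is non-constant on `ℤ`. -/
theorem stmt12 (d : ℕ) (hd : 2 ≤ d) (α β : MvPolynomial (Fin d × Fin d) ℂ)
    (hβ : ∀ Y : Matrix.SpecialLinearGroup (Fin d) ℤ,
      matEval β (Y.val.map (Int.cast : ℤ → ℂ)) ≠ 0)
    (hnc : ∃ M M' : Matrix (Fin d) (Fin d) ℂ, M.det = 1 ∧ M'.det = 1 ∧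
      matEval β M ≠ 0 ∧ matEval β M' ≠ 0 ∧
      matEval α M / matEval β M ≠ matEval α M' / matEval β M') :
    ∃ (Y : Matrix.SpecialLinearGroup (Fin d) ℤ) (B : Matrix (Fin d) (Fin d) ℤ),
      IsNilpotent B ∧ ∃ k k' : ℤ,
        matEval α ((Y.val * (1 + k • B)).map (Int.cast : ℤ → ℂ)) /
            matEval β ((Y.val * (1 + k • B)).map (Int.cast : ℤ → ℂ)) ≠
          matEval α ((Y.val * (1 + k' • B)).map (Int.cast : ℤ → ℂ)) /
            matEval β ((Y.val * (1 + k' • B)).map (Int.cast : ℤ → ℂ)) := by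
  by_contra hcon
  push_neg at hcon
  have hmap1 : ((1 : Matrix (Fin d) (Fin d) ℤ)).map (Int.cast : ℤ → ℂ) = 1 :=
    Matrix.map_one _ (by simp) (by simp)
  have hβ1 : matEval β (1 : Matrix (Fin d) (Fin d) ℂ) ≠ 0 := by
    have := hβ 1
    change matEval β ((1 : Matrix (Fin d) (Fin d) ℤ).map Int.cast) ≠ 0 at this
    rwa [hmap1] at this
  set α1 := matEval α (1 : Matrix (Fin d) (Fin d) ℂ) with hα1def
  set β1 := matEval β (1 : Matrix (Fin d) (Fin d) ℂ) with hβ1def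
  set g : MvPolynomial (Fin d × Fin d) ℂ :=
    MvPolynomial.C β1 * α - MvPolynomial.C α1 * β with hg
  have hgeval : ∀ M, matEval g M = β1 * matEval α M - α1 * matEval β M := by
    intro M
    simp [matEval, hg]
  have detz : ∀ Lz : List (TransvectionStruct (Fin d) ℤ),
      ((Lz.map TransvectionStruct.toMatrix).prod).det = 1 := by
    intro Lz
    induction Lz with
    | nil => simp
    | cons t L ih => simp [det_mul, ih]
  have hmapmul : ∀ A B : Matrix (Fin d) (Fin d) ℤ,
      ((A * B).map (Int.cast : ℤ → ℂ)) = A.map Int.cast * B.map Int.cast := by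
    intro A B
    have := Matrix.map_mul (L := A) (M := B) (f := Int.castRingHom ℂ)
    simpa using this
  have hmapT : ∀ (i j : Fin d) (c : ℤ),
      (transvection i j c).map (Int.cast : ℤ → ℂ) = transvection i j (c : ℂ) := by
    intro i j c
    ext a b
    simp only [transvection, Matrix.map_apply, Matrix.add_apply, Matrix.one_apply,
      Matrix.single, of_apply]
    split_ifs <;> push_cast <;> ring
  -- Step A : the polynomial g vanishes on integer transvection products
  have stepA : ∀ Lz : List (TransvectionStruct (Fin d) ℤ),
      matEval g (((Lz.map TransvectionStruct.toMatrix).prod).map (Int.cast : ℤ → ℂ)) = 0 := by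
    intro Lz
    induction Lz using List.reverseRecOn with
    | nil => simp [hmap1, hgeval]; ring
    | append_singleton Lz T ih =>
      obtain ⟨i, j, hij, c⟩ := T
      set P := (Lz.map TransvectionStruct.toMatrix).prod with hP
      have hdet : P.det = 1 := detz Lz
      set B : Matrix (Fin d) (Fin d) ℤ := Matrix.single i j 1 with hBdef
      have hB : IsNilpotent B := ⟨2, by
        rw [pow_two, hBdef]
        exact single_mul_single_of_ne (i := i) (j := j) (c := 1) (h := hij.symm) (d := 1)⟩
      have hcur : P * (1 + c • B) = P * transvection i j c := by
        rw [hBdef, transvection, smul_single, smul_eq_mul, mul_one]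
      have h0 : P * (1 + (0 : ℤ) • B) = P := by simp
      have key := hcon ⟨P, hdet⟩ B hB c 0
      simp only [hcur, h0] at key
      have hdet2 : (P * transvection i j c).det = 1 := by
        simp [det_mul, hdet, det_transvection_of_ne _ _ hij]
      have hβP := hβ ⟨P, hdet⟩
      have hβPT := hβ ⟨P * transvection i j c, hdet2⟩
      simp only at hβP hβPT
      rw [hgeval] at ih
      have h2 : β1 * matEval α (P.map (Int.cast : ℤ → ℂ)) =
          α1 * matEval β (P.map (Int.cast : ℤ → ℂ)) := by
        have := sub_eq_zero.mp ih
        linear_combination this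
      have key2 := (div_eq_div_iff hβPT hβP).mp key
      have goal2 : β1 * matEval α (((P * transvection i j c)).map (Int.cast : ℤ → ℂ)) =
          α1 * matEval β (((P * transvection i j c)).map (Int.cast : ℤ → ℂ)) := by
        apply mul_right_cancel₀ hβP
        calc β1 * matEval α ((P * transvection i j c).map (Int.cast : ℤ → ℂ)) *
              matEval β (P.map (Int.cast : ℤ → ℂ))
            = β1 * (matEval α ((P * transvection i j c).map (Int.cast : ℤ → ℂ)) *
              matEval β (P.map (Int.cast : ℤ → ℂ))) := by ring
          _ = β1 * (matEval α (P.map (Int.cast : ℤ → ℂ)) *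
              matEval β ((P * transvection i j c).map (Int.cast : ℤ → ℂ))) := by rw [key2]
          _ = (β1 * matEval α (P.map (Int.cast : ℤ → ℂ))) *
              matEval β ((P * transvection i j c).map (Int.cast : ℤ → ℂ)) := by ring
          _ = (α1 * matEval β (P.map (Int.cast : ℤ → ℂ))) *
              matEval β ((P * transvection i j c).map (Int.cast : ℤ → ℂ)) := by rw [h2]
          _ = α1 * matEval β ((P * transvection i j c).map (Int.cast : ℤ → ℂ)) *
              matEval β (P.map (Int.cast : ℤ → ℂ)) := by ring
      rw [List.map_append, List.prod_append, List.map_singleton, List.prod_singleton,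
        TransvectionStruct.toMatrix_mk, hgeval]
      rw [← hP]
      linear_combination goal2
  -- Step B : the polynomial g vanishes on complex transvection products times integer ones
  have stepB : ∀ L : List (TransvectionStruct (Fin d) ℂ),
      ∀ Lz : List (TransvectionStruct (Fin d) ℤ),
      matEval g ((L.map TransvectionStruct.toMatrix).prod *
        ((Lz.map TransvectionStruct.toMatrix).prod).map (Int.cast : ℤ → ℂ)) = 0 := by
    intro L
    induction L using List.reverseRecOn with
    | nil =>
      intro Lz
      simpa using stepA Lz
    | append_singleton L T ih =>
      intro Lz
      obtain ⟨i, j, hij, c⟩ := T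
      set P := (L.map TransvectionStruct.toMatrix).prod with hPdef
      set Pz := ((Lz.map TransvectionStruct.toMatrix).prod).map (Int.cast : ℤ → ℂ) with hPzdef
      set A0 := P * Pz with hA0
      set D0 := P * Matrix.single i j (1 : ℂ) * Pz with hD0
      set q : Polynomial ℂ := MvPolynomial.eval₂ Polynomial.C
        (fun pq => Polynomial.C (A0 pq.1 pq.2) + Polynomial.C (D0 pq.1 pq.2) * Polynomial.X) g
        with hqdef
      have hqeval : ∀ t : ℂ, q.eval t = matEval g (A0 + t • D0) := by
        intro t
        have h := MvPolynomial.eval₂_comp_left (Polynomial.evalRingHom t) (Polynomial.C)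
          (fun pq => Polynomial.C (A0 pq.1 pq.2) + Polynomial.C (D0 pq.1 pq.2) * Polynomial.X) g
        simp only [Polynomial.coe_evalRingHom] at h
        rw [hqdef, h]
        have hcomp : (Polynomial.evalRingHom t).comp (Polynomial.C : ℂ →+* Polynomial ℂ) =
            RingHom.id ℂ := by
          ext x
          simp
        rw [hcomp]
        rw [MvPolynomial.eval₂_id]
        unfold matEval
        have harg : (Polynomial.eval t ∘ fun pq : Fin d × Fin d =>
            Polynomial.C (A0 pq.1 pq.2) + Polynomial.C (D0 pq.1 pq.2) * Polynomial.X) =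
            fun q : Fin d × Fin d => (A0 + t • D0) q.1 q.2 := by
          funext pq
          simp [Matrix.add_apply, Matrix.smul_apply]
          ring
        rw [harg]
      have hexpand : ∀ t : ℂ, P * transvection i j t * Pz = A0 + t • D0 := by
        intro t
        rw [transvection, hA0, hD0]
        rw [mul_add, add_mul]
        congr 1
        · rw [Matrix.mul_one]
        · rw [show Matrix.single i j t = t • Matrix.single i j (1 : ℂ) by
            rw [smul_single, smul_eq_mul, mul_one]]
          rw [Matrix.mul_smul, Matrix.smul_mul]
      have hroot : ∀ k : ℤ, q.eval (k : ℂ) = 0 := by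
        intro k
        rw [hqeval, ← hexpand]
        have := ih ((⟨i, j, hij, k⟩ : TransvectionStruct (Fin d) ℤ) :: Lz)
        rw [List.map_cons, List.prod_cons, TransvectionStruct.toMatrix_mk, hmapmul, hmapT] at this
        rw [← Matrix.mul_assoc] at this
        exact this
      have hq0 : q = 0 := by
        apply Polynomial.eq_zero_of_infinite_isRoot
        apply Set.Infinite.mono (s := Set.range (Int.cast : ℤ → ℂ))
        · rintro x ⟨k, rfl⟩
          exact hroot k
        · exact Set.infinite_range_of_injective Int.cast_injective
      have := hqeval c
      rw [hq0] at this
      simp only [Polynomial.eval_zero] at this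
      rw [List.map_append, List.prod_append, List.map_singleton, List.prod_singleton,
        TransvectionStruct.toMatrix_mk, hexpand c]
      exact this.symm
  -- Final assembly
  obtain ⟨M, M', dM, dM', bM, bM', hMM⟩ := hnc
  have main : ∀ N : Matrix (Fin d) (Fin d) ℂ, N.det = 1 → matEval β N ≠ 0 →
      matEval α N * β1 ≠ α1 * matEval β N → False := by
    intro N hdN hbN hfN
    obtain ⟨L, hL⟩ := sl_transvec N hdN
    have h := stepB L []
    simp only [List.map_nil, List.prod_nil, hmap1, Matrix.mul_one] at h
    rw [← hL, hgeval] at h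
    apply hfN
    linear_combination h
  rcases eq_or_ne (matEval α M * β1) (α1 * matEval β M) with hM | hM
  · have hM' : matEval α M' * β1 ≠ α1 * matEval β M' := by
      intro hM'
      apply hMM
      have e1 : matEval α M / matEval β M = α1 / β1 := by
        rw [div_eq_div_iff bM hβ1]
        exact hM
      have e2 : matEval α M' / matEval β M' = α1 / β1 := by
        rw [div_eq_div_iff bM' hβ1]
        exact hM'
      rw [e1, e2]
    exact main M' dM' bM' hM'
  · exact main M dM bM hM
end

section
/- Let K be a number field and let τ ∈ K(X) be a non-constant rational function. Then there are infinitely many finite places v of K with the property that there exists an integer k at which τ is defined (i.e. the denominator of τ does not vanish at k) and |τ(k)|_v ≠ 1. -/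
open scoped NNReal

/-- The normalized absolute value attached to a finite place `v` of a number field `K`
(given by a height-one prime of the ring of integers): `|x|_v = N(v)^{-v(x)}`, where `N(v)` is
the absolute norm of the prime ideal.  This normalization extends the `p`-adic absolute values
on `ℚ`. -/
noncomputable def finPlaceAbs (K : Type*) [Field K] [NumberField K]
    (v : IsDedekindDomain.HeightOneSpectrum (NumberField.RingOfIntegers K)) (x : K) : ℝ :=
  (WithZeroMulInt.toNNReal
    (Nat.cast_ne_zero.mpr fun h => v.ne_bot (Ideal.absNorm_eq_zero_iff.mp h)
      : ((Ideal.absNorm v.asIdeal : ℕ) : ℝ≥0) ≠ 0)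
    (v.valuation K x) : ℝ)


open scoped NNReal nonZeroDivisors
open IsDedekindDomain IsDedekindDomain.HeightOneSpectrum NumberField Polynomial

section Aux
variable {K : Type} [Field K] [NumberField K]

private lemma one_lt_base (v : HeightOneSpectrum (𝓞 K)) :
    1 < ((Ideal.absNorm v.asIdeal : ℕ) : ℝ≥0) := by
  have h0 : Ideal.absNorm v.asIdeal ≠ 0 :=
    fun h => v.ne_bot (Ideal.absNorm_eq_zero_iff.mp h)
  have h1 : Ideal.absNorm v.asIdeal ≠ 1 := by
    intro h
    exact v.isPrime.ne_top (Ideal.absNorm_eq_one_iff.mp h)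
  have : 1 < Ideal.absNorm v.asIdeal := by omega
  exact_mod_cast this

/-- The `ℝ≥0`-valued absolute value attached to a finite place. -/
noncomputable def fv (v : HeightOneSpectrum (𝓞 K)) : K →*₀ ℝ≥0 :=
  (WithZeroMulInt.toNNReal
    (Nat.cast_ne_zero.mpr fun h => v.ne_bot (Ideal.absNorm_eq_zero_iff.mp h)
      : ((Ideal.absNorm v.asIdeal : ℕ) : ℝ≥0) ≠ 0)).comp
    (v.valuation K).toMonoidWithZeroHom

lemma fv_apply (v : HeightOneSpectrum (𝓞 K)) (x : K) :
    fv v x = WithZeroMulInt.toNNReal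
    (Nat.cast_ne_zero.mpr fun h => v.ne_bot (Ideal.absNorm_eq_zero_iff.mp h)
      : ((Ideal.absNorm v.asIdeal : ℕ) : ℝ≥0) ≠ 0) (v.valuation K x) := rfl

lemma fv_eq_one_iff (v : HeightOneSpectrum (𝓞 K)) (x : K) :
    fv v x = 1 ↔ v.valuation K x = 1 :=
  WithZeroMulInt.toNNReal_eq_one_iff (v.valuation K x)
    (Nat.cast_ne_zero.mpr fun h => v.ne_bot (Ideal.absNorm_eq_zero_iff.mp h))
    (one_lt_base v).ne'

lemma fv_mono (v : HeightOneSpectrum (𝓞 K)) : Monotone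
    (WithZeroMulInt.toNNReal
    (Nat.cast_ne_zero.mpr fun h => v.ne_bot (Ideal.absNorm_eq_zero_iff.mp h)
      : ((Ideal.absNorm v.asIdeal : ℕ) : ℝ≥0) ≠ 0)) :=
  (WithZeroMulInt.toNNReal_strictMono (one_lt_base v)).monotone

lemma fv_le_one_iff (v : HeightOneSpectrum (𝓞 K)) (x : K) :
    fv v x ≤ 1 ↔ v.valuation K x ≤ 1 :=
  WithZeroMulInt.toNNReal_le_one_iff (one_lt_base v)

lemma fv_lt_one_iff (v : HeightOneSpectrum (𝓞 K)) (x : K) :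
    fv v x < 1 ↔ v.valuation K x < 1 :=
  WithZeroMulInt.toNNReal_lt_one_iff (one_lt_base v)

lemma fv_eq_zero_iff (v : HeightOneSpectrum (𝓞 K)) (x : K) :
    fv v x = 0 ↔ x = 0 := by
  rw [fv_apply]
  constructor
  · intro h
    by_contra hx
    exact WithZeroMulInt.toNNReal_ne_zero _ ((Valuation.ne_zero_iff _).mpr hx) h
  · rintro rfl
    simp

lemma fv_add_le (v : HeightOneSpectrum (𝓞 K)) (x y : K) :
    fv v (x + y) ≤ max (fv v x) (fv v y) := by
  rw [fv_apply, fv_apply, fv_apply, ← Monotone.map_max (fv_mono v)]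
  exact fv_mono v ((v.valuation K).map_add x y)

lemma fv_neg (v : HeightOneSpectrum (𝓞 K)) (x : K) : fv v (-x) = fv v x := by
  rw [fv_apply, fv_apply, Valuation.map_neg]

lemma fv_sum_le {ι : Type*} (v : HeightOneSpectrum (𝓞 K)) (s : Finset ι) (g : ι → K)
    {B : ℝ≥0} (h : ∀ i ∈ s, fv v (g i) ≤ B) : fv v (∑ i ∈ s, g i) ≤ B := by
  classical
  induction s using Finset.cons_induction with
  | empty => simp
  | cons a s ha ih =>
      rw [Finset.sum_cons]
      refine le_trans (fv_add_le v _ _) (max_le (h a (Finset.mem_cons_self a s)) (ih ?_))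
      exact fun i hi => h i (Finset.mem_cons_of_mem hi)

lemma fv_isosceles (v : HeightOneSpectrum (𝓞 K)) {x y : K} (h : fv v y < fv v x) :
    fv v (x + y) = fv v x := by
  refine le_antisymm (le_trans (fv_add_le v x y) (max_le le_rfl h.le)) ?_
  have hx : fv v x ≤ max (fv v (x + y)) (fv v y) := by
    have hxe : x = (x + y) + (-y) := by ring
    calc fv v x = fv v ((x + y) + (-y)) := by rw [← hxe]
    _ ≤ max (fv v (x + y)) (fv v (-y)) := fv_add_le v _ _
    _ = max (fv v (x + y)) (fv v y) := by rw [fv_neg]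
  rcases le_max_iff.mp hx with h1 | h1
  · exact h1
  · exact absurd (lt_of_lt_of_le h h1) (lt_irrefl _)

lemma fv_intCast_le_one (v : HeightOneSpectrum (𝓞 K)) (n : ℤ) : fv v (n : K) ≤ 1 := by
  rw [fv_le_one_iff]
  have : ((n : K)) = algebraMap (𝓞 K) K (n : 𝓞 K) := by
    simp [map_intCast]
  rw [this]
  exact v.valuation_le_one _

lemma fv_natCast_le_one (v : HeightOneSpectrum (𝓞 K)) (n : ℕ) : fv v (n : K) ≤ 1 := by
  have := fv_intCast_le_one v (n : ℤ)
  simpa using this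

end Aux
open IsDedekindDomain IsDedekindDomain.HeightOneSpectrum NumberField Polynomial

section Aux2
variable {K : Type} [Field K] [NumberField K]

/-- finitely many places where a nonzero element has valuation ≠ 1 -/
lemma finite_val_ne_one (x : K) (hx : x ≠ 0) :
    {v : HeightOneSpectrum (𝓞 K) | v.valuation K x ≠ 1}.Finite := by
  obtain ⟨⟨a, s⟩, rfl⟩ := IsLocalization.mk'_surjective (𝓞 K)⁰ x
  have ha : a ≠ 0 := by
    rintro rfl
    simp at hx
  have hs : (s : 𝓞 K) ≠ 0 := nonZeroDivisors.coe_ne_zero s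
  have hfin : ({v : HeightOneSpectrum (𝓞 K) | v.asIdeal ∣ Ideal.span {a}} ∪
      {v : HeightOneSpectrum (𝓞 K) | v.asIdeal ∣ Ideal.span {(s : 𝓞 K)}}).Finite :=
    (Ideal.finite_factors (by simpa using ha)).union
      (Ideal.finite_factors (by simpa using hs))
  refine hfin.subset ?_
  intro v hv
  simp only [Set.mem_setOf_eq] at hv
  by_contra hmem
  simp only [Set.mem_union, Set.mem_setOf_eq, not_or] at hmem
  have h1 : v.intValuation a = 1 :=
    le_antisymm (v.intValuation_le_one a)
      (not_lt.mp (fun hlt => hmem.1 ((v.intValuation_lt_one_iff_dvd a).mp hlt)))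
  have h2 : v.intValuation (s : 𝓞 K) = 1 :=
    le_antisymm (v.intValuation_le_one _)
      (not_lt.mp (fun hlt => hmem.2 ((v.intValuation_lt_one_iff_dvd _).mp hlt)))
  exact hv (by rw [v.valuation_of_mk', h1, h2, div_one])

/-- an element with all valuations equal to one generates the trivial fractional ideal -/
lemma spanSingleton_eq_one_of_val_eq_one {x : K} (hx : x ≠ 0)
    (h : ∀ v : HeightOneSpectrum (𝓞 K), v.valuation K x = 1) :
    FractionalIdeal.spanSingleton (𝓞 K)⁰ x = 1 := by
  classical
  obtain ⟨⟨a, s⟩, rfl⟩ := IsLocalization.mk'_surjective (𝓞 K)⁰ x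
  have ha : a ≠ 0 := by rintro rfl; simp at hx
  have hs : (s : 𝓞 K) ≠ 0 := nonZeroDivisors.coe_ne_zero s
  have hIne : FractionalIdeal.spanSingleton (𝓞 K)⁰ (IsLocalization.mk' K a s) ≠ 0 := by
    rw [ne_eq, FractionalIdeal.spanSingleton_eq_zero_iff]
    exact hx
  have hrepr : FractionalIdeal.spanSingleton (𝓞 K)⁰ (IsLocalization.mk' K a s) =
      FractionalIdeal.spanSingleton (𝓞 K)⁰ ((algebraMap (𝓞 K) K) (s : 𝓞 K))⁻¹ *
        ↑(Ideal.span {a}) := by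
    rw [FractionalIdeal.coeIdeal_span_singleton,
      FractionalIdeal.spanSingleton_mul_spanSingleton]
    congr 1
    rw [IsFractionRing.mk'_eq_div, div_eq_inv_mul]
  have hcount : ∀ v : HeightOneSpectrum (𝓞 K),
      FractionalIdeal.count K v (FractionalIdeal.spanSingleton (𝓞 K)⁰
        (IsLocalization.mk' K a s)) = 0 := by
    intro v
    rw [FractionalIdeal.count_well_defined K v hIne hrepr]
    have hval := h v
    rw [v.valuation_of_mk'] at hval
    have h1 : v.intValuation a = v.intValuation (s : 𝓞 K) := by
      have hs1 : v.intValuation (s : 𝓞 K) ≠ 0 := v.intValuation_ne_zero _ hs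
      rw [div_eq_one_iff_eq hs1] at hval
      exact hval
    rw [intValuation_apply, intValuation_apply, v.intValuationDef_if_neg ha,
      v.intValuationDef_if_neg hs] at h1
    have h2 : ((Associates.mk v.asIdeal).count (Associates.mk (Ideal.span {a})).factors : ℤ)
        = ((Associates.mk v.asIdeal).count
            (Associates.mk (Ideal.span {(s : 𝓞 K)})).factors : ℤ) := by
      have := WithZero.exp_inj.mp h1
      omega
    omega
  calc FractionalIdeal.spanSingleton (𝓞 K)⁰ (IsLocalization.mk' K a s)
      = ∏ᶠ v : HeightOneSpectrum (𝓞 K), (v.asIdeal : FractionalIdeal (𝓞 K)⁰ K) ^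
        (FractionalIdeal.count K v (FractionalIdeal.spanSingleton (𝓞 K)⁰
          (IsLocalization.mk' K a s))) :=
        (FractionalIdeal.finprod_heightOneSpectrum_factorization' K hIne).symm
    _ = 1 := by
        rw [finprod_eq_one_of_forall_eq_one]
        intro v
        rw [hcount v, zpow_zero]

/-- an element with all valuations equal to one has norm of absolute value one -/
lemma abs_norm_eq_one_of_val_eq_one {x : K} (hx : x ≠ 0)
    (h : ∀ v : HeightOneSpectrum (𝓞 K), v.valuation K x = 1) :
    |Algebra.norm ℚ x| = 1 := by
  have := spanSingleton_eq_one_of_val_eq_one hx h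
  have h2 := congrArg (FractionalIdeal.absNorm (R := 𝓞 K) (K := K)) this
  rwa [FractionalIdeal.absNorm_span_singleton, map_one] at h2
end Aux2
section Aux3
variable {K : Type} [Field K] [NumberField K]

/-- valuation bound for polynomial values at integers -/
lemma fv_poly_eval_le (v : HeightOneSpectrum (𝓞 K)) (p : K[X]) {C : ℝ≥0} (hC : 1 ≤ C)
    (hcoeff : ∀ i, fv v (p.coeff i) ≤ C) (k : ℤ) : fv v (p.eval (k : K)) ≤ C := by
  rw [Polynomial.eval_eq_sum_range]
  refine fv_sum_le v _ _ ?_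
  intro i _
  rw [map_mul, map_pow]
  calc fv v (p.coeff i) * fv v ((k : K)) ^ i ≤ C * 1 ^ i := by
        exact mul_le_mul' (hcoeff i) (pow_le_pow_left' (fv_intCast_le_one v k) i)
    _ = C := by rw [one_pow, mul_one]

/-- congruence bound: if `M ∣ k - k₀` then the value difference is small -/
lemma fv_poly_eval_sub_le (v : HeightOneSpectrum (𝓞 K)) (p : K[X]) {C : ℝ≥0}
    (hcoeff : ∀ i, fv v (p.coeff i) ≤ C) {M k k₀ : ℤ} (hMk : M ∣ k - k₀) :
    fv v (p.eval (k : K) - p.eval (k₀ : K)) ≤ C * fv v ((M : K)) := by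
  have hsub : p.eval (k : K) - p.eval (k₀ : K) =
      ∑ i ∈ Finset.range (p.natDegree + 1), p.coeff i * (((k ^ i - k₀ ^ i : ℤ) : K)) := by
    rw [Polynomial.eval_eq_sum_range, Polynomial.eval_eq_sum_range, ← Finset.sum_sub_distrib]
    congr 1
    ext i
    push_cast
    ring
  rw [hsub]
  refine fv_sum_le v _ _ ?_
  intro i _
  obtain ⟨z, hz⟩ := dvd_trans hMk (sub_dvd_pow_sub_pow k k₀ i)
  rw [hz]
  push_cast
  rw [map_mul, map_mul]
  calc fv v (p.coeff i) * (fv v ((M : K)) * fv v ((z : K)))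
      ≤ C * (fv v ((M : K)) * 1) :=
        mul_le_mul' (hcoeff i) (mul_le_mul' le_rfl (fv_intCast_le_one v z))
    _ = C * fv v ((M : K)) := by rw [mul_one]

/-- the set of places where some coefficient is large is finite -/
lemma finite_badCoeff (p : K[X]) :
    {v : HeightOneSpectrum (𝓞 K) | ¬ ∀ i, fv v (p.coeff i) ≤ 1}.Finite := by
  have hsub : {v : HeightOneSpectrum (𝓞 K) | ¬ ∀ i, fv v (p.coeff i) ≤ 1} ⊆
      ⋃ i ∈ p.support, {v : HeightOneSpectrum (𝓞 K) | v.valuation K (p.coeff i) ≠ 1} := by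
    intro v hv
    simp only [Set.mem_setOf_eq, not_forall, not_le] at hv
    obtain ⟨i, hi⟩ := hv
    have hne : p.coeff i ≠ 0 := by
      intro h
      rw [h, map_zero] at hi
      exact absurd hi (by simp)
    simp only [Set.mem_iUnion, Set.mem_setOf_eq]
    refine ⟨i, Polynomial.mem_support_iff.mpr hne, ?_⟩
    intro h
    rw [← fv_eq_one_iff] at h
    rw [h] at hi
    exact lt_irrefl _ hi
  refine Set.Finite.subset ?_ hsub
  refine Set.Finite.biUnion (Finset.finite_toSet p.support) ?_
  intro i hi
  exact finite_val_ne_one _ (Polynomial.mem_support_iff.mp hi)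

/-- A nonconstant polynomial takes values of given norm absolute value
only finitely often at integers. -/
lemma finite_norm_fiber (r : K[X]) (hr : 0 < r.natDegree) (B : ℚ) :
    {k : ℤ | |Algebra.norm ℚ (r.eval (k : K))| = B}.Finite := by
  classical
  have hne' : Nonempty (K →ₐ[ℚ] ℂ) := ⟨(Classical.arbitrary (K →+* ℂ)).toRatAlgHom⟩
  have hrne : r ≠ 0 := fun h => by simp [h] at hr
  set Q : Polynomial ℂ := ∏ σ : K →ₐ[ℚ] ℂ, r.map (σ : K →+* ℂ) with hQ
  have hQfac : ∀ σ : K →ₐ[ℚ] ℂ, r.map (σ : K →+* ℂ) ≠ 0 := fun σ =>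
    Polynomial.map_ne_zero hrne
  have hQne : Q ≠ 0 := Finset.prod_ne_zero_iff.mpr (fun σ _ => hQfac σ)
  have hQdeg : 0 < Q.natDegree := by
    rw [hQ, Polynomial.natDegree_prod _ _ (fun σ _ => hQfac σ)]
    have hcard : 0 < Fintype.card (K →ₐ[ℚ] ℂ) := Fintype.card_pos
    calc 0 < ∑ _σ : K →ₐ[ℚ] ℂ, r.natDegree := by
          rw [Finset.sum_const, Finset.card_univ, smul_eq_mul]
          positivity
      _ = ∑ σ : K →ₐ[ℚ] ℂ, (r.map (σ : K →+* ℂ)).natDegree := by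
          refine Finset.sum_congr rfl (fun σ _ => ?_)
          rw [Polynomial.natDegree_map]
  have hQeval : ∀ k : ℤ, Q.eval (k : ℂ) = ((Algebra.norm ℚ (r.eval (k : K)) : ℚ) : ℂ) := by
    intro k
    have := Algebra.norm_eq_prod_embeddings ℚ ℂ (r.eval (k : K))
    rw [hQ, Polynomial.eval_prod]
    have heval : ∀ σ : K →ₐ[ℚ] ℂ, (r.map (σ : K →+* ℂ)).eval ((k : ℂ)) =
        σ (r.eval (k : K)) := by
      intro σ
      have hk : ((k : ℂ)) = (σ : K →+* ℂ) ((k : K)) := by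
        rw [map_intCast]
      rw [hk, Polynomial.eval_map, Polynomial.eval₂_at_apply]
      rfl
    calc ∏ σ : K →ₐ[ℚ] ℂ, (r.map (σ : K →+* ℂ)).eval ((k : ℂ))
        = ∏ σ : K →ₐ[ℚ] ℂ, σ (r.eval (k : K)) := Finset.prod_congr rfl (fun σ _ => heval σ)
      _ = algebraMap ℚ ℂ (Algebra.norm ℚ (r.eval (k : K))) := this.symm
      _ = ((Algebra.norm ℚ (r.eval (k : K)) : ℚ) : ℂ) := by
          rw [eq_ratCast (algebraMap ℚ ℂ)]
  set G : Polynomial ℂ := Q ^ 2 - Polynomial.C ((B ^ 2 : ℚ) : ℂ) with hG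
  have hGne : G ≠ 0 := by
    intro h
    have h2 : Q ^ 2 = Polynomial.C ((B ^ 2 : ℚ) : ℂ) := by
      rw [hG] at h
      linear_combination (norm := ring_nf) h
    have := congrArg Polynomial.natDegree h2
    rw [Polynomial.natDegree_pow, Polynomial.natDegree_C] at this
    omega
  have hsub : {k : ℤ | |Algebra.norm ℚ (r.eval (k : K))| = B} ⊆
      (Int.cast : ℤ → ℂ) ⁻¹' {z : ℂ | G.IsRoot z} := by
    intro k hk
    simp only [Set.mem_setOf_eq] at hk
    simp only [Set.mem_preimage, Set.mem_setOf_eq, Polynomial.IsRoot.def]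
    rw [hG, Polynomial.eval_sub, Polynomial.eval_pow, Polynomial.eval_C, hQeval k]
    have habs : (Algebra.norm ℚ (r.eval (k : K))) ^ 2 = B ^ 2 := by
      rw [← sq_abs, hk]
    push_cast [← habs]
    ring
  refine Set.Finite.subset ?_ hsub
  refine Set.Finite.preimage ?_ (Polynomial.finite_setOf_isRoot hGne)
  exact Function.Injective.injOn Int.cast_injective
end Aux3


lemma finPlaceAbs_eq_fv (K : Type) [Field K] [NumberField K]
    (v : IsDedekindDomain.HeightOneSpectrum (𝓞 K)) (x : K) :
    finPlaceAbs K v x = (fv v x : ℝ) := rfl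



/-- **Lemma (many places where a non-constant rational function is not a unit).**
Let `K` be a number field and `τ ∈ K(X)` a non-constant rational function.  Then there are
infinitely many finite places `v` of `K` such that `|τ(k)|_v ≠ 1` for some integer `k` at which
`τ` is defined. -/
theorem stmt13 (K : Type) [Field K] [NumberField K] (τ : RatFunc K)
    (hτ : ∀ c : K, τ ≠ RatFunc.C c) :
    {v : IsDedekindDomain.HeightOneSpectrum (NumberField.RingOfIntegers K) |
      ∃ k : ℤ, τ.denom.eval (k : K) ≠ 0 ∧
        finPlaceAbs K v (τ.eval (RingHom.id K) (k : K)) ≠ 1}.Infinite := by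
  classical
  by_contra hcon
  rw [Set.not_infinite] at hcon
  set p := τ.num with hpdef
  set q := τ.denom with hqdef
  have hq0 : q ≠ 0 := τ.denom_ne_zero
  have hτ0 : τ ≠ 0 := by
    intro h
    exact hτ 0 (by rw [h, map_zero])
  have hp0 : p ≠ 0 := RatFunc.num_ne_zero hτ0
  obtain ⟨A, B, hAB⟩ := RatFunc.isCoprime_num_denom τ
  -- the big finite bad set
  set SS : Set (IsDedekindDomain.HeightOneSpectrum (𝓞 K)) :=
    ({v | ∃ k : ℤ, τ.denom.eval (k : K) ≠ 0 ∧
        finPlaceAbs K v (τ.eval (RingHom.id K) (k : K)) ≠ 1} ∪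
      {v | ¬ ∀ i, fv v (p.coeff i) ≤ 1}) ∪
      ({v | ¬ ∀ i, fv v (q.coeff i) ≤ 1} ∪
      ({v | ¬ ∀ i, fv v (A.coeff i) ≤ 1} ∪ {v | ¬ ∀ i, fv v (B.coeff i) ≤ 1})) with hSSdef
  have hSS : SS.Finite := by
    refine Set.Finite.union (Set.Finite.union hcon (finite_badCoeff p))
      (Set.Finite.union (finite_badCoeff q)
        (Set.Finite.union (finite_badCoeff A) (finite_badCoeff B)))
  -- evaluation formula
  have heval : ∀ k : ℤ, τ.eval (RingHom.id K) (k : K) = p.eval (k : K) / q.eval (k : K) := by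
    intro k
    rfl
  -- the key claim at good places
  have key : ∀ v, v ∉ SS → ∀ k : ℤ, q.eval (k : K) ≠ 0 → p.eval (k : K) ≠ 0 →
      fv v (p.eval (k : K)) = 1 ∧ fv v (q.eval (k : K)) = 1 := by
    intro v hv k hqk hpk
    simp only [hSSdef, Set.mem_union, not_or] at hv
    obtain ⟨⟨h1, h2⟩, h3, h4, h5⟩ := hv
    rw [Set.mem_setOf_eq] at h1 h2 h3 h4 h5
    push_neg at h1
    have h1' : fv v (p.eval (k : K) / q.eval (k : K)) = 1 := by
      have := h1 k hqk
      rw [heval k, finPlaceAbs_eq_fv] at this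
      exact_mod_cast this
    have hqv : fv v (q.eval (k : K)) ≠ 0 := fun h => hqk ((fv_eq_zero_iff v _).mp h)
    have heqv : fv v (p.eval (k : K)) = fv v (q.eval (k : K)) := by
      rw [map_div₀] at h1'
      exact (div_eq_one_iff_eq hqv).mp h1'
    have hple : fv v (p.eval (k : K)) ≤ 1 :=
      fv_poly_eval_le v p le_rfl (not_not.mp h2) k
    have hBez : A.eval (k : K) * p.eval (k : K) + B.eval (k : K) * q.eval (k : K) = 1 := by
      have := congrArg (Polynomial.eval ((k : K))) hAB
      simpa using this
    have hone : (1 : ℝ≥0) ≤ fv v (p.eval (k : K)) := by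
      calc (1 : ℝ≥0) = fv v 1 := (map_one (fv v)).symm
        _ = fv v (A.eval (k : K) * p.eval (k : K) + B.eval (k : K) * q.eval (k : K)) := by
            rw [hBez]
        _ ≤ max (fv v (A.eval (k : K) * p.eval (k : K)))
              (fv v (B.eval (k : K) * q.eval (k : K))) := fv_add_le v _ _
        _ ≤ max (fv v (p.eval (k : K))) (fv v (q.eval (k : K))) := by
            refine max_le_max ?_ ?_
            · rw [map_mul]
              exact mul_le_of_le_one_left zero_le
                (fv_poly_eval_le v A le_rfl (not_not.mp h4) k)
            · rw [map_mul]
              exact mul_le_of_le_one_left zero_le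
                (fv_poly_eval_le v B le_rfl (not_not.mp h5) k)
        _ = fv v (p.eval (k : K)) := by rw [← heqv, max_self]
    have hpe : fv v (p.eval (k : K)) = 1 := le_antisymm hple hone
    exact ⟨hpe, heqv ▸ hpe⟩
  -- one of num, denom is nonconstant
  have hdeg : 0 < p.natDegree ∨ 0 < q.natDegree := by
    by_contra hcon2
    push_neg at hcon2
    obtain ⟨hdp, hdq⟩ := hcon2
    obtain ⟨a, ha⟩ := Polynomial.natDegree_eq_zero.mp (Nat.le_zero.mp hdp)
    obtain ⟨b, hb⟩ := Polynomial.natDegree_eq_zero.mp (Nat.le_zero.mp hdq)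
    refine hτ (a / b) ?_
    rw [← RatFunc.num_div_denom τ, ← hpdef, ← hqdef, ← ha, ← hb, RatFunc.algebraMap_C,
      RatFunc.algebraMap_C, ← map_div₀]
  -- the nonconstant polynomial `r`
  set r : Polynomial K := if 0 < p.natDegree then p else q with hrdef
  have hr : 0 < r.natDegree := by
    rw [hrdef]
    split_ifs with h
    · exact h
    · exact hdeg.resolve_left h
  have hrkey : ∀ v, v ∉ SS → ∀ k : ℤ, q.eval (k : K) ≠ 0 → p.eval (k : K) ≠ 0 →
      fv v (r.eval (k : K)) = 1 := by
    intro v hv k hqk hpk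
    rw [hrdef]
    split_ifs with h
    · exact (key v hv k hqk hpk).1
    · exact (key v hv k hqk hpk).2
  -- the set of good integers
  set T : Set ℤ := {k : ℤ | p.eval (k : K) ≠ 0 ∧ q.eval (k : K) ≠ 0} with hTdef
  have hTc : (Tᶜ).Finite := by
    have hsub : Tᶜ ⊆ (Int.cast : ℤ → K) ⁻¹' {x : K | (p * q).IsRoot x} := by
      intro k hk
      simp only [hTdef, Set.mem_compl_iff, Set.mem_setOf_eq, not_and_or, not_not] at hk
      simp only [Set.mem_preimage, Set.mem_setOf_eq, Polynomial.IsRoot.def,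
        Polynomial.eval_mul]
      rcases hk with h | h
      · rw [h, zero_mul]
      · rw [h, mul_zero]
    exact Set.Finite.subset (Set.Finite.preimage
      (Function.Injective.injOn Int.cast_injective)
      (Polynomial.finite_setOf_isRoot (mul_ne_zero hp0 hq0))) hsub
  have hT : T.Infinite := by
    have := hTc.infinite_compl
    rwa [compl_compl] at this
  have hrT : ∀ k ∈ T, r.eval (k : K) ≠ 0 := by
    intro k hk
    rw [hrdef]
    split_ifs with h
    · exact hk.1
    · exact hk.2
  -- base point
  obtain ⟨k₀, hk₀⟩ := hT.nonempty
  set c : K := r.eval ((k₀ : K)) with hcdef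
  have hc0 : c ≠ 0 := hrT k₀ hk₀
  have hcfv : ∀ v, fv v c ≠ 0 := fun v h => hc0 ((fv_eq_zero_iff v _).mp h)
  -- the modulus
  set SF := hSS.toFinset with hSFdef
  set m : ℕ := ∏ v ∈ SF, Ideal.absNorm v.asIdeal with hmdef
  have hm0 : m ≠ 0 := by
    rw [hmdef]
    refine Finset.prod_ne_zero_iff.mpr (fun v _ => ?_)
    exact fun h => v.ne_bot (Ideal.absNorm_eq_zero_iff.mp h)
  have hmv : ∀ v ∈ SF, fv v ((m : K)) < 1 := by
    intro v hv
    have hcast : ((m : K)) = ∏ w ∈ SF, ((Ideal.absNorm w.asIdeal : ℕ) : K) := by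
      rw [hmdef]; push_cast; rfl
    rw [hcast, map_prod, ← Finset.mul_prod_erase SF _ hv]
    have hvlt : fv v ((Ideal.absNorm v.asIdeal : ℕ) : K) < 1 := by
      rw [fv_lt_one_iff]
      have hcast2 : (((Ideal.absNorm v.asIdeal : ℕ) : K)) =
          algebraMap (𝓞 K) K ((Ideal.absNorm v.asIdeal : ℕ) : 𝓞 K) := by push_cast; rfl
      rw [hcast2, IsDedekindDomain.HeightOneSpectrum.valuation_lt_one_iff_dvd]
      rw [Ideal.dvd_iff_le, Ideal.span_singleton_le_iff_mem]
      exact Ideal.absNorm_mem v.asIdeal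
    calc fv v ((Ideal.absNorm v.asIdeal : ℕ) : K) *
          ∏ w ∈ SF.erase v, fv v ((Ideal.absNorm w.asIdeal : ℕ) : K)
        ≤ fv v ((Ideal.absNorm v.asIdeal : ℕ) : K) * 1 := by
          refine mul_le_mul' le_rfl (Finset.prod_le_one (fun w _ => zero_le)
            (fun w _ => fv_natCast_le_one v _))
      _ < 1 := by rwa [mul_one]
  -- coefficient bounds
  set Cv : IsDedekindDomain.HeightOneSpectrum (𝓞 K) → ℝ≥0 :=
    fun v => ((Finset.range (r.natDegree + 1)).sup (fun i => fv v (r.coeff i))) ⊔ 1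
    with hCvdef
  have hCv1 : ∀ v, 1 ≤ Cv v := fun v => le_sup_right
  have hCv0 : ∀ v, Cv v ≠ 0 := fun v h => by
    have := hCv1 v
    rw [h] at this
    exact absurd this (by simp)
  have hCvcoeff : ∀ v i, fv v (r.coeff i) ≤ Cv v := by
    intro v i
    by_cases hi : i ∈ Finset.range (r.natDegree + 1)
    · exact le_sup_of_le_left (Finset.le_sup (f := fun i => fv v (r.coeff i)) hi)
    · have : r.coeff i = 0 := by
        refine Polynomial.coeff_eq_zero_of_natDegree_lt ?_
        simp only [Finset.mem_range] at hi
        omega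
      rw [this, map_zero]
      exact zero_le
  -- choice of the exponent
  have hEx : ∀ v : IsDedekindDomain.HeightOneSpectrum (𝓞 K), ∃ n : ℕ,
      v ∈ SF → Cv v * fv v ((m : K)) ^ n < fv v c := by
    intro v
    by_cases hv : v ∈ SF
    · have hpos : 0 < fv v c / Cv v := by
        refine lt_of_le_of_ne zero_le (fun h => ?_)
        rw [eq_comm, _root_.div_eq_zero_iff] at h
        rcases h with h | h
        · exact hcfv v h
        · exact hCv0 v (by simpa using h)
      obtain ⟨n, hn⟩ := NNReal.exists_pow_lt_of_lt_one hpos (hmv v hv)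
      refine ⟨n, fun _ => ?_⟩
      rw [lt_div_iff₀ (pos_iff_ne_zero.mpr (hCv0 v))] at hn
      calc Cv v * fv v ((m : K)) ^ n = fv v ((m : K)) ^ n * Cv v := mul_comm _ _
        _ < fv v c := hn
    · exact ⟨0, fun h => absurd h hv⟩
  choose Ef hEf using hEx
  set E : ℕ := SF.sup Ef with hEdef
  have hE : ∀ v ∈ SF, Cv v * fv v ((m : K)) ^ E < fv v c := by
    intro v hv
    refine lt_of_le_of_lt ?_ (hEf v hv)
    refine mul_le_mul' le_rfl ?_
    exact pow_le_pow_of_le_one zero_le (hmv v hv).le (Finset.le_sup hv)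
  -- the modulus M
  set M : ℤ := (m : ℤ) ^ E with hMdef
  have hM0 : M ≠ 0 := pow_ne_zero _ (by exact_mod_cast hm0)
  have hMcast : ((M : K)) = ((m : K)) ^ E := by rw [hMdef]; push_cast; rfl
  -- the infinite set of integers
  set T' : Set ℤ := {k : ℤ | k ∈ T ∧ M ∣ (k - k₀)} with hT'def
  have hT' : T'.Infinite := by
    have hAP : {k : ℤ | M ∣ (k - k₀)}.Infinite := by
      refine Set.infinite_of_injective_forall_mem
        (f := fun t : ℤ => k₀ + M * t) ?_ ?_
      · intro a b hab
        simp only [add_right_inj] at hab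
        exact mul_left_cancel₀ hM0 hab
      · intro t
        simp only [Set.mem_setOf_eq]
        exact ⟨t, by ring⟩
    refine Set.Infinite.mono ?_ (hAP.diff hTc)
    intro k hk
    obtain ⟨hk1, hk2⟩ := hk
    rw [Set.mem_compl_iff, not_not] at hk2
    exact ⟨hk2, hk1⟩
  -- all valuations of r(k)/c are 1
  have claim2 : ∀ k ∈ T', ∀ v : IsDedekindDomain.HeightOneSpectrum (𝓞 K),
      v.valuation K (r.eval ((k : K)) / c) = 1 := by
    intro k hk v
    obtain ⟨hkT, hkM⟩ := hk
    rw [← fv_eq_one_iff, map_div₀, div_eq_one_iff_eq (hcfv v)]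
    by_cases hv : v ∈ SF
    · -- close to c at places of SF
      have hdiff : fv v (r.eval ((k : K)) - c) < fv v c := by
        have := fv_poly_eval_sub_le v r (hCvcoeff v) hkM
        rw [← hcdef] at this
        refine lt_of_le_of_lt this ?_
        rw [hMcast, map_pow]
        exact hE v hv
      have : r.eval ((k : K)) = c + (r.eval ((k : K)) - c) := by ring
      rw [this, fv_isosceles v hdiff]
    · -- both are 1 at other places
      have hvSS : v ∉ SS := by
        rw [hSFdef, Set.Finite.mem_toFinset] at hv
        exact hv
      rw [hrkey v hvSS k hkT.2 hkT.1, hcdef, hrkey v hvSS k₀ hk₀.2 hk₀.1]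
  -- norms are constant on T'
  have claim3 : ∀ k ∈ T', |Algebra.norm ℚ (r.eval ((k : K)))| = |Algebra.norm ℚ c| := by
    intro k hk
    have hrk0 : r.eval ((k : K)) ≠ 0 := hrT k hk.1
    have hy0 : r.eval ((k : K)) / c ≠ 0 := div_ne_zero hrk0 hc0
    have habs := abs_norm_eq_one_of_val_eq_one hy0 (claim2 k hk)
    have : r.eval ((k : K)) = (r.eval ((k : K)) / c) * c := by
      field_simp
    rw [this, map_mul, abs_mul, habs, one_mul]
  -- contradiction with the finiteness of norm fibers
  have hfiber := finite_norm_fiber r hr (|Algebra.norm ℚ c|)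
  exact (hT'.mono (fun k hk => claim3 k hk)) hfiber
end

section
/- Let K be a number field and, for i = 1,…,ℓ, let αᵢ, βᵢ be polynomials with coefficients in K in the d² entries of a d×d matrix such that αᵢ(Y) ≠ 0 and βᵢ(Y) ≠ 0 for every Y ∈ SL_d(ℤ); set σᵢ(Y) := αᵢ(Y)/βᵢ(Y) ∈ K. Let Y ∈ SL_d(ℤ) be such that σᵢ(Y) is not a unit of the ring of integers 𝒪_K for any i. Then there exists a positive integer n such that for every B ∈ SL_d(ℤ) with B ≡ I (mod n) and every i ∈ {1,…,ℓ}, σᵢ(Y·B) is not a unit of 𝒪_K. -/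
open Matrix NumberField

/-- Evaluation of a polynomial with coefficients in `K` at the (cast) entries of an integer
`d×d` matrix. -/
noncomputable def matEvalK {d : ℕ} (K : Type*) [Field K]
    (f : MvPolynomial (Fin d × Fin d) K) (M : Matrix (Fin d) (Fin d) ℤ) : K :=
  MvPolynomial.eval (fun q : Fin d × Fin d => ((M q.1 q.2 : ℤ) : K)) f


open scoped Multiplicative
open scoped WithZero
open IsDedekindDomain

section aux

lemma exists_pow_mul_lt' (C : ℤᵐ⁰) {c ε : ℤᵐ⁰} (hc0 : c ≠ 0) (hc : c < 1) (hε : 0 < ε) :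
    ∃ k : ℕ, C * c ^ k < ε := by
  rcases eq_or_ne C 0 with rfl | hC0
  · exact ⟨0, by simpa using hε⟩
  obtain ⟨cu, rfl⟩ := WithZero.ne_zero_iff_exists.mp hc0
  obtain ⟨Cu, rfl⟩ := WithZero.ne_zero_iff_exists.mp hC0
  obtain ⟨εu, rfl⟩ := WithZero.ne_zero_iff_exists.mp hε.ne'
  set a := Multiplicative.toAdd cu with ha
  set S := Multiplicative.toAdd Cu with hS
  set t := Multiplicative.toAdd εu with ht
  have hca : a < 0 := by
    have : cu < (1 : Multiplicative ℤ) := by exact_mod_cast hc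
    exact this
  refine ⟨(S - t).toNat + 1, ?_⟩
  have key : S + (((S - t).toNat + 1 : ℕ) : ℤ) * a < t := by
    have h1 : (S - t) < ((S - t).toNat + 1 : ℕ) := by
      have := Int.self_le_toNat (S - t); push_cast; omega
    have h2 : (((S - t).toNat + 1 : ℕ) : ℤ) * a ≤ -(((S - t).toNat + 1 : ℕ) : ℤ) := by
      have : (((S - t).toNat + 1 : ℕ) : ℤ) * a ≤ (((S - t).toNat + 1 : ℕ) : ℤ) * (-1) := by
        apply mul_le_mul_of_nonneg_left (by omega) (by positivity)
      omega
    omega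
  have : Cu * cu ^ ((S - t).toNat + 1) < εu := by
    have : Multiplicative.toAdd (Cu * cu ^ ((S - t).toNat + 1)) < Multiplicative.toAdd εu := by
      have e : Multiplicative.toAdd (Cu * cu ^ ((S - t).toNat + 1))
          = S + (((S - t).toNat + 1 : ℕ) : ℤ) * a := by
        rw [toAdd_mul, toAdd_pow]; push_cast [nsmul_eq_mul]; ring
      rw [e]; exact key
    exact this
  exact_mod_cast this

variable {K : Type} [Field K] [NumberField K]

lemma val_unit_eq_one' (v : HeightOneSpectrum (𝓞 K)) (u : (𝓞 K)ˣ) :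
    v.valuation K (algebraMap (𝓞 K) K (u : 𝓞 K)) = 1 := by
  have h1 : v.valuation K (algebraMap (𝓞 K) K (u : 𝓞 K)) ≤ 1 := v.valuation_le_one _
  have h2 : v.valuation K (algebraMap (𝓞 K) K ((u⁻¹ : (𝓞 K)ˣ) : 𝓞 K)) ≤ 1 := v.valuation_le_one _
  have hm : v.valuation K (algebraMap (𝓞 K) K (u : 𝓞 K))
      * v.valuation K (algebraMap (𝓞 K) K ((u⁻¹ : (𝓞 K)ˣ) : 𝓞 K)) = 1 := by
    rw [← _root_.map_mul, ← _root_.map_mul]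
    simp
  refine le_antisymm h1 ?_
  calc (1 : ℤᵐ⁰) = _ * _ := hm.symm
    _ ≤ v.valuation K (algebraMap (𝓞 K) K (u : 𝓞 K)) * 1 := mul_le_mul_right h2 _
    _ = _ := mul_one _

lemma exists_val_ne_one' {x : K} (hx : x ≠ 0)
    (h : ¬ ∃ u : (𝓞 K)ˣ, algebraMap (𝓞 K) K (u : 𝓞 K) = x) :
    ∃ v : HeightOneSpectrum (𝓞 K), v.valuation K x ≠ 1 := by
  classical
  by_contra hc
  push_neg at hc
  apply h
  obtain ⟨⟨r, s⟩, hrs⟩ := IsLocalization.mk'_surjective (nonZeroDivisors (𝓞 K)) x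
  dsimp only at hrs
  have hs0 : (s : 𝓞 K) ≠ 0 := nonZeroDivisors.coe_ne_zero s
  have hr0 : r ≠ 0 := by
    rintro rfl
    rw [IsLocalization.mk'_zero] at hrs
    exact hx hrs.symm
  have hval : ∀ v : HeightOneSpectrum (𝓞 K), v.intValuation r = v.intValuation (s : 𝓞 K) := by
    intro v
    have := hc v
    rw [← hrs, v.valuation_of_mk'] at this
    have hs' : v.intValuationDef (s : 𝓞 K) ≠ 0 := v.intValuation_ne_zero _ hs0
    have := (div_eq_one_iff_eq hs').mp this
    rw [HeightOneSpectrum.intValuation_apply, HeightOneSpectrum.intValuation_apply]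
    exact this
  have hcount : ∀ p : Associates (Ideal (𝓞 K)), Irreducible p →
      p.count (Associates.mk (Ideal.span {r})).factors
        = p.count (Associates.mk (Ideal.span {(s : 𝓞 K)})).factors := by
    intro p hp
    obtain ⟨J, rfl⟩ := Associates.exists_rep p
    have hJirr : Irreducible J := Associates.irreducible_mk.mp hp
    have hJprime : Prime J := UniqueFactorizationMonoid.irreducible_iff_prime.mp hJirr
    let v : HeightOneSpectrum (𝓞 K) := ⟨J, Ideal.isPrime_of_prime hJprime, hJprime.ne_zero⟩
    have := hval v
    rw [HeightOneSpectrum.intValuation_apply, HeightOneSpectrum.intValuation_apply,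
      HeightOneSpectrum.intValuationDef_if_neg _ hr0,
      HeightOneSpectrum.intValuationDef_if_neg _ hs0] at this
    have : (-(Associates.mk v.asIdeal).count (Associates.mk (Ideal.span {r})).factors : ℤ)
        = (-(Associates.mk v.asIdeal).count
            (Associates.mk (Ideal.span {(s : 𝓞 K)})).factors : ℤ) := by
      exact WithZero.exp_inj.mp this
    simpa [v] using this
  have hspan : Ideal.span {r} = Ideal.span {(s : 𝓞 K)} := by
    have h1 : Associates.mk (Ideal.span {r}) = Associates.mk (Ideal.span {(s : 𝓞 K)}) := by
      apply Associates.eq_of_eq_counts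
      · simpa [Associates.mk_ne_zero, Ideal.span_singleton_eq_bot] using hr0
      · simpa [Associates.mk_ne_zero, Ideal.span_singleton_eq_bot] using hs0
      · exact hcount
    exact associated_iff_eq.mp (Associates.mk_eq_mk_iff_associated.mp h1)
  obtain ⟨u, hu⟩ := Ideal.span_singleton_eq_span_singleton.mp hspan
  refine ⟨u⁻¹, ?_⟩
  rw [← hrs, IsFractionRing.mk'_eq_div]
  rw [eq_div_iff (by simpa using hs0 : algebraMap (𝓞 K) K (s : 𝓞 K) ≠ 0)]
  rw [← _root_.map_mul]
  congr 1
  rw [← hu, mul_comm r (u : 𝓞 K), ← mul_assoc]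
  simp

lemma int_val_le_one' (v : HeightOneSpectrum (𝓞 K)) (t : ℤ) :
    v.valuation K ((t : ℤ) : K) ≤ 1 := by
  have : ((t : ℤ) : K) = algebraMap (𝓞 K) K ((t : ℤ) : 𝓞 K) := by
    rw [map_intCast]
  rw [this]
  exact v.valuation_le_one _

lemma eval_congr_bound' {ι : Type} [Fintype ι] (v : HeightOneSpectrum (𝓞 K))
    (f : MvPolynomial ι K) {n : ℕ} (hn : n ≠ 0) (x y : ι → ℤ)
    (h : ∀ s, (n : ℤ) ∣ (x s - y s)) :
    v.valuation K (MvPolynomial.eval (fun s => ((x s : ℤ) : K)) f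
      - MvPolynomial.eval (fun s => ((y s : ℤ) : K)) f)
      ≤ (f.support.sup fun m => v.valuation K (MvPolynomial.coeff m f)) * v.valuation K ((n : K)) := by
  classical
  haveI : NeZero n := ⟨hn⟩
  rw [MvPolynomial.eval_eq, MvPolynomial.eval_eq, ← Finset.sum_sub_distrib]
  apply Valuation.map_sum_le
  intro m hm
  have hdvd : (n : ℤ) ∣ (∏ i ∈ m.support, x i ^ m i) - (∏ i ∈ m.support, y i ^ m i) := by
    have hz : ∀ s, ((x s : ZMod n) = (y s : ZMod n)) := by
      intro s
      rw [← sub_eq_zero, ← Int.cast_sub, ZMod.intCast_zmod_eq_zero_iff_dvd]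
      exact h s
    rw [← ZMod.intCast_zmod_eq_zero_iff_dvd]
    push_cast
    rw [sub_eq_zero]
    exact Finset.prod_congr rfl fun i _ => by rw [hz i]
  obtain ⟨t, ht⟩ := hdvd
  have he : MvPolynomial.coeff m f * ∏ i ∈ m.support, ((x i : ℤ) : K) ^ m i
      - MvPolynomial.coeff m f * ∏ i ∈ m.support, ((y i : ℤ) : K) ^ m i
      = MvPolynomial.coeff m f * ((n : K) * ((t : ℤ) : K)) := by
    have : (((∏ i ∈ m.support, x i ^ m i) - (∏ i ∈ m.support, y i ^ m i) : ℤ) : K)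
        = (n : K) * ((t : ℤ) : K) := by rw [ht]; push_cast; ring
    rw [← this]
    push_cast
    ring
  rw [he, _root_.map_mul, _root_.map_mul]
  calc v.valuation K (MvPolynomial.coeff m f) * (v.valuation K ((n : K)) * v.valuation K ((t : ℤ) : K))
      ≤ v.valuation K (MvPolynomial.coeff m f) * (v.valuation K ((n : K)) * 1) :=
        mul_le_mul_right (mul_le_mul_right (int_val_le_one' v t) _) _
    _ = v.valuation K (MvPolynomial.coeff m f) * v.valuation K ((n : K)) := by rw [mul_one]
    _ ≤ (f.support.sup fun m => v.valuation K (MvPolynomial.coeff m f)) * v.valuation K ((n : K)) :=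
        mul_le_mul_left
          (Finset.le_sup (f := fun m => v.valuation K (MvPolynomial.coeff m f)) hm) _


lemma key_lemma' {d : ℕ} (αi βi : MvPolynomial (Fin d × Fin d) K)
    (hα : ∀ Z : Matrix.SpecialLinearGroup (Fin d) ℤ, matEvalK K αi Z.val ≠ 0)
    (hβ : ∀ Z : Matrix.SpecialLinearGroup (Fin d) ℤ, matEvalK K βi Z.val ≠ 0)
    (Y : Matrix.SpecialLinearGroup (Fin d) ℤ)
    (hnu : ¬ ∃ u : (𝓞 K)ˣ, (algebraMap (𝓞 K) K) (u : 𝓞 K)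
      = matEvalK K αi Y.val / matEvalK K βi Y.val) :
    ∃ n : ℕ, 0 < n ∧ ∀ B : Matrix.SpecialLinearGroup (Fin d) ℤ,
      (∀ i j, (n : ℤ) ∣ (B.val - 1) i j) →
      ¬ ∃ u : (𝓞 K)ˣ, (algebraMap (𝓞 K) K) (u : 𝓞 K)
        = matEvalK K αi (Y * B).val / matEvalK K βi (Y * B).val := by
  classical
  have ha := hα Y
  have hb := hβ Y
  set a := matEvalK K αi Y.val with ha_def
  set b := matEvalK K βi Y.val with hb_def
  obtain ⟨v, hv1⟩ := exists_val_ne_one' (div_ne_zero ha hb) hnu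
  have hvb0 : v.valuation K b ≠ 0 := by
    simpa [Valuation.ne_zero_iff] using hb
  have hva0 : v.valuation K a ≠ 0 := by
    simpa [Valuation.ne_zero_iff] using ha
  have hvab : v.valuation K a ≠ v.valuation K b := by
    intro hE
    apply hv1
    rw [map_div₀, hE, div_self hvb0]
  obtain ⟨π, hπI, hπ0⟩ := Submodule.exists_mem_ne_zero_of_ne_bot v.ne_bot
  have hcom : Ideal.comap (algebraMap ℤ (𝓞 K)) v.asIdeal ≠ ⊥ :=
    Ideal.comap_ne_bot_of_integral_mem hπ0 hπI (Algebra.IsIntegral.isIntegral π)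
  obtain ⟨z, hzI, hz0⟩ := Submodule.exists_mem_ne_zero_of_ne_bot hcom
  rw [Ideal.mem_comap] at hzI
  set m : ℕ := z.natAbs with hm_def
  have hm0 : m ≠ 0 := Int.natAbs_ne_zero.mpr hz0
  have hzmem : ((z : ℤ) : 𝓞 K) ∈ v.asIdeal := by simpa using hzI
  have hmI : ((m : ℕ) : 𝓞 K) ∈ v.asIdeal := by
    have h1 : ((m : ℕ) : 𝓞 K) = (((z.natAbs : ℤ)) : 𝓞 K) := by
      rw [hm_def]; exact (Int.cast_natCast _).symm
    rw [h1]
    rcases Int.natAbs_eq z with hcase | hcase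
    · rw [← hcase]; exact hzmem
    · have h2 : (z.natAbs : ℤ) = -z := by omega
      rw [h2, Int.cast_neg]; exact neg_mem hzmem
  set c := v.valuation K ((m : K)) with hc_def
  have hmK0 : ((m : ℕ) : K) ≠ 0 := Nat.cast_ne_zero.mpr hm0
  have hc0 : c ≠ 0 := by simpa [hc_def, Valuation.ne_zero_iff] using hmK0
  have hc1 : c < 1 := by
    have h1 : ((m : ℕ) : K) = algebraMap (𝓞 K) K ((m : ℕ) : 𝓞 K) := by rw [map_natCast]
    rw [hc_def, h1, v.valuation_of_algebraMap]
    exact (v.intValuation_lt_one_iff_dvd _).mpr (Ideal.dvd_span_singleton.mpr hmI)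
  set Ca := (αi.support.sup fun mo => v.valuation K (MvPolynomial.coeff mo αi)) with hCa
  set Cb := (βi.support.sup fun mo => v.valuation K (MvPolynomial.coeff mo βi)) with hCb
  have hεpos : 0 < min (v.valuation K a) (v.valuation K b) := by
    rw [lt_min_iff]
    exact ⟨zero_lt_iff.mpr hva0, zero_lt_iff.mpr hvb0⟩
  obtain ⟨k, hk⟩ := exists_pow_mul_lt' (max Ca Cb) hc0 hc1 hεpos
  refine ⟨m ^ k, Nat.pos_of_ne_zero (pow_ne_zero k hm0), ?_⟩
  intro B hB
  set x : Fin d × Fin d → ℤ := fun q => (Y * B).val q.1 q.2 with hx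
  set y : Fin d × Fin d → ℤ := fun q => Y.val q.1 q.2 with hy
  have hdvd : ∀ q, ((m ^ k : ℕ) : ℤ) ∣ (x q - y q) := by
    intro q
    have he : x q - y q = ∑ r, Y.val q.1 r * (B.val - 1) r q.2 := by
      simp only [hx, hy, Matrix.SpecialLinearGroup.coe_mul, Matrix.mul_apply,
        Matrix.sub_apply, mul_sub, Finset.sum_sub_distrib, Matrix.one_apply,
        mul_ite, mul_one, mul_zero, Finset.sum_ite_eq', Finset.mem_univ, if_true]
    rw [he]
    exact Finset.dvd_sum fun r _ => Dvd.dvd.mul_left (hB r q.2) _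
  have hvn : v.valuation K (((m ^ k : ℕ)) : K) = c ^ k := by
    have h1 : (((m ^ k : ℕ)) : K) = ((m : ℕ) : K) ^ k := by push_cast; ring
    rw [h1, map_pow, hc_def]
  have hboundA : v.valuation K (matEvalK K αi (Y * B).val - a) < v.valuation K a := by
    have h1 := eval_congr_bound' v αi (pow_ne_zero k hm0) x y hdvd
    have h2 : MvPolynomial.eval (fun s => ((x s : ℤ) : K)) αi = matEvalK K αi (Y * B).val := rfl
    have h3 : MvPolynomial.eval (fun s => ((y s : ℤ) : K)) αi = a := rfl
    rw [h2, h3, hvn] at h1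
    calc v.valuation K (matEvalK K αi (Y * B).val - a) ≤ Ca * c ^ k := h1
      _ ≤ max Ca Cb * c ^ k := mul_le_mul_left (le_max_left _ _) _
      _ < min (v.valuation K a) (v.valuation K b) := hk
      _ ≤ v.valuation K a := min_le_left _ _
  have hboundB : v.valuation K (matEvalK K βi (Y * B).val - b) < v.valuation K b := by
    have h1 := eval_congr_bound' v βi (pow_ne_zero k hm0) x y hdvd
    have h2 : MvPolynomial.eval (fun s => ((x s : ℤ) : K)) βi = matEvalK K βi (Y * B).val := rfl
    have h3 : MvPolynomial.eval (fun s => ((y s : ℤ) : K)) βi = b := rfl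
    rw [h2, h3, hvn] at h1
    calc v.valuation K (matEvalK K βi (Y * B).val - b) ≤ Cb * c ^ k := h1
      _ ≤ max Ca Cb * c ^ k := mul_le_mul_left (le_max_right _ _) _
      _ < min (v.valuation K a) (v.valuation K b) := hk
      _ ≤ v.valuation K b := min_le_right _ _
  have hva' : v.valuation K (matEvalK K αi (Y * B).val) = v.valuation K a := by
    have he : matEvalK K αi (Y * B).val = a + (matEvalK K αi (Y * B).val - a) := by ring
    rw [he]
    exact Valuation.map_add_eq_of_lt_left _ hboundA
  have hvb' : v.valuation K (matEvalK K βi (Y * B).val) = v.valuation K b := by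
    have he : matEvalK K βi (Y * B).val = b + (matEvalK K βi (Y * B).val - b) := by ring
    rw [he]
    exact Valuation.map_add_eq_of_lt_left _ hboundB
  rintro ⟨u, hu⟩
  have h1 := val_unit_eq_one' v u
  rw [hu, map_div₀, hva', hvb'] at h1
  exact hvab ((div_eq_one_iff_eq hvb0).mp h1)

end aux

/-- **Lemma (persistence of non-unit values on a congruence coset).**
Let `K` be a number field and, for `i = 1,…,ℓ`, let `αᵢ, βᵢ` be polynomials over `K` in the
entries of a `d×d` matrix, nonvanishing on `SL_d(ℤ)`; set `σᵢ := αᵢ/βᵢ`.  If `Y ∈ SL_d(ℤ)` is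
such that no `σᵢ(Y)` is a unit of `𝒪_K`, then there is `n ≥ 1` such that for every
`B ∈ SL_d(ℤ)` with `B ≡ I (mod n)` and every `i`, `σᵢ(YB)` is not a unit of `𝒪_K`. -/
theorem stmt15 (K : Type) [Field K] [NumberField K] (d ℓ : ℕ)
    (α β : Fin ℓ → MvPolynomial (Fin d × Fin d) K)
    (hα : ∀ i, ∀ Y : Matrix.SpecialLinearGroup (Fin d) ℤ, matEvalK K (α i) Y.val ≠ 0)
    (hβ : ∀ i, ∀ Y : Matrix.SpecialLinearGroup (Fin d) ℤ, matEvalK K (β i) Y.val ≠ 0)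
    (Y : Matrix.SpecialLinearGroup (Fin d) ℤ)
    (hY : ∀ i, ¬ ∃ u : (𝓞 K)ˣ,
      (algebraMap (𝓞 K) K) (u : 𝓞 K) = matEvalK K (α i) Y.val / matEvalK K (β i) Y.val) :
    ∃ n : ℕ, 0 < n ∧ ∀ B : Matrix.SpecialLinearGroup (Fin d) ℤ,
      (∀ i j, (n : ℤ) ∣ (B.val - 1) i j) →
      ∀ i, ¬ ∃ u : (𝓞 K)ˣ,
        (algebraMap (𝓞 K) K) (u : 𝓞 K) =
          matEvalK K (α i) (Y * B).val / matEvalK K (β i) (Y * B).val := by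
  classical
  choose F hFpos hF using fun i => key_lemma' (α i) (β i) (hα i) (hβ i) Y (hY i)
  refine ⟨∏ i, F i, Finset.prod_pos (fun i _ => hFpos i), ?_⟩
  intro B hB i
  apply hF i B
  intro p q
  exact dvd_trans
    (Int.natCast_dvd_natCast.mpr (Finset.dvd_prod_of_mem F (Finset.mem_univ i))) (hB p q)
end

section
/- Let d ≥ 3 and let P ∈ ℤ[t] be a monic polynomial of degree d that is irreducible over ℚ, whose Galois group over ℚ acts on its complex roots as the full symmetric group, which has at most one real root, and whose roots of maximal modulus are exactly a non-real complex conjugate pair (i.e. there is ξ ∈ ℂ∖ℝ with P(ξ) = 0 such that every root z ∉ {ξ, conj ξ} satisfies |z| < |ξ|). Then there are no angular resonances between distinct roots of P: for any two distinct complex roots z, w of P and any positive integers a, b, one has z^a·(conj w)^b ∉ ℝ. -/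
open Polynomial

lemma exists_perm_of_pairs {α : Type*} [DecidableEq α] :
    ∀ (l : List (α × α)), (l.map Prod.fst).Nodup → (l.map Prod.snd).Nodup →
      ∃ π : Equiv.Perm α, ∀ pr ∈ l, π pr.1 = pr.2 := by
  intro l
  induction l with
  | nil => exact fun _ _ => ⟨1, by simp⟩
  | cons hd tl ih =>
    intro h1 h2
    simp only [List.map_cons, List.nodup_cons, List.mem_map] at h1 h2
    obtain ⟨π₀, hπ₀⟩ := ih h1.2 h2.2
    refine ⟨π₀.trans (Equiv.swap (π₀ hd.1) hd.2), ?_⟩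
    intro pr hpr
    rcases List.mem_cons.mp hpr with rfl | hpr
    · simp [Equiv.swap_apply_left]
    · have hfst : pr.1 ≠ hd.1 := fun h => h1.1 ⟨pr, hpr, h⟩
      have hsnd : pr.2 ≠ hd.2 := fun h => h2.1 ⟨pr, hpr, h⟩
      have hv : π₀ pr.1 = pr.2 := hπ₀ pr hpr
      have hne1 : π₀ pr.1 ≠ π₀ hd.1 := fun h => hfst (π₀.injective h)
      simp only [Equiv.trans_apply]
      rw [Equiv.swap_apply_of_ne_of_ne hne1 (hv ▸ hsnd), hv]

/-- **Proposition (no angular resonances between roots).**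
Let `d ≥ 3` and let `P ∈ ℤ[t]` be monic of degree `d`, irreducible over `ℚ`, with Galois group
acting on its complex roots as the full symmetric group, with at most one real root, and whose
roots of maximal modulus are exactly a non-real conjugate pair `ξ, conj ξ`.  Then for any two
distinct complex roots `z, w` of `P` and any positive integers `a, b`, `z^a (conj w)^b ∉ ℝ`. -/
theorem stmt18 (d : ℕ) (hd : 3 ≤ d) (P : Polynomial ℤ) (hmonic : P.Monic)
    (hdeg : P.natDegree = d)
    (hirr : Irreducible (P.map (Int.castRingHom ℚ)))
    (hgal : letI : Fact (((P.map (Int.castRingHom ℚ)).map (algebraMap ℚ ℂ)).Splits) :=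
        ⟨IsAlgClosed.splits _⟩
      Function.Bijective (Polynomial.Gal.galActionHom (P.map (Int.castRingHom ℚ)) ℂ))
    (hreal : {x : ℝ | Polynomial.aeval x P = 0}.Subsingleton)
    (ξ : ℂ) (hξim : ξ.im ≠ 0) (hξroot : Polynomial.aeval ξ P = 0)
    (hdom : ∀ z : ℂ, Polynomial.aeval z P = 0 → z ≠ ξ → z ≠ (starRingEnd ℂ) ξ →
      ‖z‖ < ‖ξ‖) :
    ∀ z w : ℂ, Polynomial.aeval z P = 0 → Polynomial.aeval w P = 0 → z ≠ w →
      ∀ a b : ℕ, 0 < a → 0 < b → (z ^ a * (starRingEnd ℂ) w ^ b).im ≠ 0 := by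
  intro z w hz hw hzw a b ha hb him
  classical
  set p : Polynomial ℚ := P.map (Int.castRingHom ℚ) with hpdef
  haveI hF : Fact ((p.map (algebraMap ℚ ℂ)).Splits) := ⟨IsAlgClosed.splits _⟩
  -- basic facts
  have hp0 : p ≠ 0 := (hmonic.map (Int.castRingHom ℚ)).ne_zero
  have hpd : p.natDegree = d := by rw [hpdef, hmonic.natDegree_map, hdeg]
  have hmem : ∀ x : ℂ, Polynomial.aeval x P = 0 ↔ x ∈ p.rootSet ℂ := by
    intro x
    rw [Polynomial.mem_rootSet]
    constructor
    · intro h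
      refine ⟨hp0, ?_⟩
      rw [hpdef, ← algebraMap_int_eq, Polynomial.aeval_map_algebraMap]
      exact h
    · rintro ⟨-, h⟩
      rwa [hpdef, ← algebraMap_int_eq, Polynomial.aeval_map_algebraMap] at h
  have hconj : ∀ x : ℂ, Polynomial.aeval x P = 0 →
      Polynomial.aeval ((starRingEnd ℂ) x) P = 0 := by
    intro x hx
    have h1 : (starRingEnd ℂ) (Polynomial.aeval x P) =
        Polynomial.aeval ((starRingEnd ℂ) x) P := by
      rw [Polynomial.aeval_def, Polynomial.aeval_def, Polynomial.hom_eval₂]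
      congr 1
      exact Subsingleton.elim _ _
    rw [← h1, hx, map_zero]
  have hne0 : ∀ x : ℂ, Polynomial.aeval x P = 0 → x ≠ 0 := by
    intro x hx hx0
    subst hx0
    have h0 : Polynomial.aeval (0 : ℂ) p = 0 := ((Polynomial.mem_rootSet).mp ((hmem 0).mp hx)).2
    rw [Polynomial.aeval_def, Polynomial.eval₂_at_zero] at h0
    have hc0 : p.coeff 0 = 0 := (algebraMap ℚ ℂ).injective (by rwa [map_zero])
    obtain ⟨q, hq⟩ := Polynomial.X_dvd_iff.mpr hc0
    rcases hirr.isUnit_or_isUnit hq with hu | hu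
    · exact Polynomial.not_isUnit_X hu
    · have hq0 : q ≠ 0 := fun h => hp0 (by rw [hq, h, mul_zero])
      have : p.natDegree = 1 := by
        rw [hq, Polynomial.natDegree_mul Polynomial.X_ne_zero hq0,
          Polynomial.natDegree_X, Polynomial.natDegree_eq_zero_of_isUnit hu]
      omega
  have hnotboth : z.im ≠ 0 ∨ w.im ≠ 0 := by
    by_contra hcon
    push_neg at hcon
    have haux : ∀ x : ℂ, Polynomial.aeval x P = 0 → x.im = 0 →
        Polynomial.aeval x.re P = 0 := by
      intro x hx him0
      have hxre : (algebraMap ℝ ℂ) x.re = x := by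
        rw [Complex.coe_algebraMap]
        exact Complex.ext (by simp) (by simp [him0])
      rw [← Polynomial.aeval_algebraMap_eq_zero_iff ℂ, hxre]
      exact hx
    have h1 := haux z hz hcon.1
    have h2 := haux w hw hcon.2
    exact hzw (Complex.ext (hreal h1 h2) (hcon.1.trans hcon.2.symm))
  -- cardinality
  have hcard : Fintype.card (p.rootSet ℂ) = d := by
    rw [Polynomial.card_rootSet_eq_natDegree hirr.separable (IsAlgClosed.splits _), hpd]
  -- root elements
  have hξc : Polynomial.aeval ((starRingEnd ℂ) ξ) P = 0 := hconj ξ hξroot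
  set ξR : p.rootSet ℂ := ⟨ξ, (hmem ξ).mp hξroot⟩ with hξRdef
  set ξbR : p.rootSet ℂ := ⟨(starRingEnd ℂ) ξ, (hmem _).mp hξc⟩ with hξbRdef
  set zR : p.rootSet ℂ := ⟨z, (hmem z).mp hz⟩ with hzRdef
  set zbR : p.rootSet ℂ := ⟨(starRingEnd ℂ) z, (hmem _).mp (hconj z hz)⟩ with hzbRdef
  set wR : p.rootSet ℂ := ⟨w, (hmem w).mp hw⟩ with hwRdef
  set wbR : p.rootSet ℂ := ⟨(starRingEnd ℂ) w, (hmem _).mp (hconj w hw)⟩ with hwbRdef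
  have hξξb : ξR ≠ ξbR := fun h => hξim (Complex.conj_eq_iff_im.mp
    (congrArg Subtype.val h).symm)
  -- small roots
  have hdiff : d - 2 ≤ (Finset.univ \ {ξR, ξbR} : Finset (p.rootSet ℂ)).card := by
    rw [Finset.card_sdiff_of_subset (Finset.subset_univ _), Finset.card_univ, hcard]
    have h2 : ({ξR, ξbR} : Finset (p.rootSet ℂ)).card ≤ 2 :=
      (Finset.card_insert_le _ _).trans (by simp)
    omega
  have hsmalls : ∀ s : p.rootSet ℂ, s ≠ ξR → s ≠ ξbR →
      ‖(s : ℂ)‖ < ‖ξ‖ := by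
    intro s h1 h2
    refine hdom s ((hmem s).mpr s.2) (fun h => h1 (Subtype.ext h)) (fun h => h2 (Subtype.ext h))
  -- transfer of multiplicative relations along the Galois action
  have hcoe : ∀ x : p.rootSet ℂ,
      algebraMap p.SplittingField ℂ
        ((Polynomial.Gal.rootsEquivRoots p ℂ).symm x : p.SplittingField) = x := by
    intro x
    conv_rhs => rw [← (Polynomial.Gal.rootsEquivRoots p ℂ).apply_symm_apply x]
    rfl
  have key : ∀ (π : Equiv.Perm (p.rootSet ℂ)) (x y u v : p.rootSet ℂ),
      (x : ℂ) ^ a * (u : ℂ) ^ b = (y : ℂ) ^ a * (v : ℂ) ^ b →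
      ((π x : p.rootSet ℂ) : ℂ) ^ a * ((π u : p.rootSet ℂ) : ℂ) ^ b =
        ((π y : p.rootSet ℂ) : ℂ) ^ a * ((π v : p.rootSet ℂ) : ℂ) ^ b := by
    intro π x y u v hrel
    obtain ⟨σ, rfl⟩ := hgal.2 π
    rw [← hcoe x, ← hcoe y, ← hcoe u, ← hcoe v] at hrel
    have hrel' : ((Polynomial.Gal.rootsEquivRoots p ℂ).symm x : p.SplittingField) ^ a *
        ((Polynomial.Gal.rootsEquivRoots p ℂ).symm u : p.SplittingField) ^ b =
        ((Polynomial.Gal.rootsEquivRoots p ℂ).symm y : p.SplittingField) ^ a *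
        ((Polynomial.Gal.rootsEquivRoots p ℂ).symm v : p.SplittingField) ^ b := by
      apply (algebraMap p.SplittingField ℂ).injective
      simpa only [map_mul, map_pow] using hrel
    have hrel2 := congrArg σ hrel'
    simp only [map_mul, map_pow] at hrel2
    have final : (algebraMap p.SplittingField ℂ
          (σ ((Polynomial.Gal.rootsEquivRoots p ℂ).symm x : p.SplittingField))) ^ a *
        (algebraMap p.SplittingField ℂ
          (σ ((Polynomial.Gal.rootsEquivRoots p ℂ).symm u : p.SplittingField))) ^ b =
        (algebraMap p.SplittingField ℂ
          (σ ((Polynomial.Gal.rootsEquivRoots p ℂ).symm y : p.SplittingField))) ^ a *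
        (algebraMap p.SplittingField ℂ
          (σ ((Polynomial.Gal.rootsEquivRoots p ℂ).symm v : p.SplittingField))) ^ b := by
      simp only [← map_pow, ← map_mul]
      exact congrArg _ (congrArg σ hrel')
    exact final
  -- the resonance relation
  have hrel : z ^ a * ((starRingEnd ℂ) w) ^ b = ((starRingEnd ℂ) z) ^ a * w ^ b := by
    have h1 : (starRingEnd ℂ) (z ^ a * (starRingEnd ℂ) w ^ b) =
        z ^ a * (starRingEnd ℂ) w ^ b := Complex.conj_eq_iff_im.mpr him
    rw [map_mul, map_pow, map_pow, Complex.conj_conj] at h1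
    exact h1.symm
  have hξpos : 0 < ‖ξ‖ := by
    apply norm_pos_iff.mpr
    intro h
    exact hξim (by rw [h]; simp)
  -- case analysis
  by_cases hzim : z.im = 0
  · -- z real, so w is not real
    have hwim : w.im ≠ 0 := hnotboth.resolve_left (fun h => h hzim)
    have hcz : (starRingEnd ℂ) z = z := Complex.conj_eq_iff_im.mpr hzim
    rw [hcz] at hrel
    have hww : ((starRingEnd ℂ) w) ^ b = w ^ b :=
      mul_left_cancel₀ (pow_ne_zero _ (hne0 z hz)) hrel
    obtain ⟨s, hs⟩ := Finset.card_pos.mp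
      (lt_of_lt_of_le (by omega) hdiff)
    rw [Finset.mem_sdiff, Finset.mem_insert, Finset.mem_singleton] at hs
    push_neg at hs
    obtain ⟨-, hs1, hs2⟩ := hs
    have hwwb : wR ≠ wbR := fun h => hwim (Complex.conj_eq_iff_im.mp
      (congrArg Subtype.val h).symm)
    obtain ⟨π, hπ⟩ := exists_perm_of_pairs [(wR, ξR), (wbR, s)]
      (by simp [hwwb]) (by simp [Ne.symm hs1])
    have hrel0 : (wR : ℂ) ^ a * (wbR : ℂ) ^ b = (wR : ℂ) ^ a * (wR : ℂ) ^ b := by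
      show w ^ a * ((starRingEnd ℂ) w) ^ b = w ^ a * w ^ b
      rw [hww]
    have hkey := key π wR wR wbR wR hrel0
    rw [hπ (wR, ξR) (List.mem_cons_self),
      hπ (wbR, s) (List.mem_cons_of_mem _ (List.mem_cons_self))] at hkey
    have habs := congrArg norm hkey
    simp only [norm_mul, norm_pow] at habs
    have hlt : ‖(s : ℂ)‖ < ‖ξ‖ := hsmalls s hs1 hs2
    have : ‖(s : ℂ)‖ ^ b = ‖ξ‖ ^ b := by
      have := mul_left_cancel₀ (pow_ne_zero a hξpos.ne') habs
      simpa using this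
    exact absurd this (ne_of_lt (pow_lt_pow_left₀ hlt (norm_nonneg _) hb.ne'))
  · by_cases hwim : w.im = 0
    · -- w real, z not real
      have hcw : (starRingEnd ℂ) w = w := Complex.conj_eq_iff_im.mpr hwim
      rw [hcw] at hrel
      have hzz : z ^ a = ((starRingEnd ℂ) z) ^ a :=
        mul_right_cancel₀ (pow_ne_zero _ (hne0 w hw)) hrel
      obtain ⟨s, hs⟩ := Finset.card_pos.mp (lt_of_lt_of_le (by omega) hdiff)
      rw [Finset.mem_sdiff, Finset.mem_insert, Finset.mem_singleton] at hs
      push_neg at hs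
      obtain ⟨-, hs1, hs2⟩ := hs
      have hzzb : zR ≠ zbR := fun h => hzim (Complex.conj_eq_iff_im.mp
        (congrArg Subtype.val h).symm)
      obtain ⟨π, hπ⟩ := exists_perm_of_pairs [(zR, ξR), (zbR, s)]
        (by simp [hzzb]) (by simp [Ne.symm hs1])
      have hrel0 : (zR : ℂ) ^ a * (zR : ℂ) ^ b = (zbR : ℂ) ^ a * (zR : ℂ) ^ b := by
        show z ^ a * z ^ b = ((starRingEnd ℂ) z) ^ a * z ^ b
        rw [hzz]
      have hkey := key π zR zbR zR zR hrel0
      rw [hπ (zR, ξR) (List.mem_cons_self),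
        hπ (zbR, s) (List.mem_cons_of_mem _ (List.mem_cons_self))] at hkey
      have habs := congrArg norm hkey
      simp only [norm_mul, norm_pow] at habs
      have hlt : ‖(s : ℂ)‖ < ‖ξ‖ := hsmalls s hs1 hs2
      have : ‖ξ‖ ^ a = ‖(s : ℂ)‖ ^ a := by
        have := mul_right_cancel₀ (pow_ne_zero b hξpos.ne') habs
        simpa using this
      exact absurd this.symm (ne_of_lt (pow_lt_pow_left₀ hlt (norm_nonneg _) ha.ne'))
    · -- both non-real
      have hzzb : zR ≠ zbR := fun h => hzim (Complex.conj_eq_iff_im.mp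
        (congrArg Subtype.val h).symm)
      have hwwb : wR ≠ wbR := fun h => hwim (Complex.conj_eq_iff_im.mp
        (congrArg Subtype.val h).symm)
      by_cases hzcw : z = (starRingEnd ℂ) w
      · -- z = conj w
        have hwz : w = (starRingEnd ℂ) z := by rw [hzcw, Complex.conj_conj]
        rw [← hzcw, ← hwz] at hrel
        obtain ⟨s, hs⟩ := Finset.card_pos.mp (lt_of_lt_of_le (by omega) hdiff)
        rw [Finset.mem_sdiff, Finset.mem_insert, Finset.mem_singleton] at hs
        push_neg at hs
        obtain ⟨-, hs1, hs2⟩ := hs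
        have hzwR : zR ≠ wR := fun h => hzw (congrArg Subtype.val h)
        obtain ⟨π, hπ⟩ := exists_perm_of_pairs [(zR, ξR), (wR, s)]
          (by simp [hzwR]) (by simp [Ne.symm hs1])
        have hrel0 : (zR : ℂ) ^ a * (zR : ℂ) ^ b = (wR : ℂ) ^ a * (wR : ℂ) ^ b := hrel
        have hkey := key π zR wR zR wR hrel0
        rw [hπ (zR, ξR) (List.mem_cons_self),
          hπ (wR, s) (List.mem_cons_of_mem _ (List.mem_cons_self))] at hkey
        have habs := congrArg norm hkey
        simp only [norm_mul, norm_pow] at habs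
        have hlt : ‖(s : ℂ)‖ < ‖ξ‖ := hsmalls s hs1 hs2
        have hRlt : ‖(s : ℂ)‖ ^ a * ‖(s : ℂ)‖ ^ b <
            ‖ξ‖ ^ a * ‖ξ‖ ^ b :=
          mul_lt_mul'' (pow_lt_pow_left₀ hlt (norm_nonneg _) ha.ne')
            (pow_lt_pow_left₀ hlt (norm_nonneg _) hb.ne')
            (pow_nonneg (norm_nonneg _) _) (pow_nonneg (norm_nonneg _) _)
        exact absurd habs hRlt.ne'
      · -- four distinct roots z, conj z, w, conj w
        have hczw : (starRingEnd ℂ) z ≠ w := fun h => hzcw (by rw [← h, Complex.conj_conj])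
        have hzwR : zR ≠ wR := fun h => hzw (congrArg Subtype.val h)
        have hzwbR : zR ≠ wbR := fun h => hzcw (congrArg Subtype.val h)
        have hzbwR : zbR ≠ wR := fun h => hczw (congrArg Subtype.val h)
        have hzbwbR : zbR ≠ wbR := fun h => hzw ((starRingEnd ℂ).injective
          (congrArg Subtype.val h))
        have h4 : ({zR, zbR, wR, wbR} : Finset (p.rootSet ℂ)).card = 4 := by
          rw [Finset.card_insert_of_notMem (by simp [hzzb, hzwR, hzwbR]),
            Finset.card_insert_of_notMem (by simp [hzbwR, hzbwbR]),
            Finset.card_pair hwwb]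
        have h4d : 4 ≤ d := by
          have := Finset.card_le_univ ({zR, zbR, wR, wbR} : Finset (p.rootSet ℂ))
          rw [h4, hcard] at this
          exact this
        obtain ⟨s1, hs1m, s2, hs2m, hs12⟩ := Finset.one_lt_card.mp
          (lt_of_lt_of_le (by omega) hdiff)
        rw [Finset.mem_sdiff, Finset.mem_insert, Finset.mem_singleton] at hs1m hs2m
        push_neg at hs1m hs2m
        obtain ⟨-, hs11, hs12'⟩ := hs1m
        obtain ⟨-, hs21, hs22⟩ := hs2m
        obtain ⟨π, hπ⟩ := exists_perm_of_pairs [(zR, ξR), (wbR, ξbR), (zbR, s1), (wR, s2)]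
          (by simp [hzzb, hzwR, hzwbR, hzbwR, hzbwbR, hwwb, Ne.symm hzzb, Ne.symm hzwR, Ne.symm hzwbR, Ne.symm hzbwR, Ne.symm hzbwbR, Ne.symm hwwb])
          (by simp [hξξb, Ne.symm hs11, Ne.symm hs12', Ne.symm hs21, Ne.symm hs22, hs12])
        have hrel0 : (zR : ℂ) ^ a * (wbR : ℂ) ^ b = (zbR : ℂ) ^ a * (wR : ℂ) ^ b := hrel
        have hkey := key π zR zbR wbR wR hrel0
        rw [hπ (zR, ξR) (by simp), hπ (wbR, ξbR) (by simp), hπ (zbR, s1) (by simp),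
          hπ (wR, s2) (by simp)] at hkey
        have hkey' : ξ ^ a * ((starRingEnd ℂ) ξ) ^ b = (s1 : ℂ) ^ a * (s2 : ℂ) ^ b := hkey
        have habs := congrArg norm hkey'
        simp only [norm_mul, norm_pow, Complex.norm_conj] at habs
        have hlt1 : ‖(s1 : ℂ)‖ < ‖ξ‖ := hsmalls s1 hs11 hs12'
        have hlt2 : ‖(s2 : ℂ)‖ < ‖ξ‖ := hsmalls s2 hs21 hs22
        have hRlt : ‖(s1 : ℂ)‖ ^ a * ‖(s2 : ℂ)‖ ^ b <
            ‖ξ‖ ^ a * ‖ξ‖ ^ b :=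
          mul_lt_mul'' (pow_lt_pow_left₀ hlt1 (norm_nonneg _) ha.ne')
            (pow_lt_pow_left₀ hlt2 (norm_nonneg _) hb.ne')
            (pow_nonneg (norm_nonneg _) _) (pow_nonneg (norm_nonneg _) _)
        exact absurd habs hRlt.ne'
end

section
/- Let P ∈ ℝ[t] be a monic polynomial with deg P = d ≥ 3 and P(0) = 1. Then there exists A₀ > 0 such that for all real numbers a, b ≥ A₀: if d is even, the polynomial P(t) + a·t^{d−2} + b·t² has no real roots; and if d is odd, the polynomial P(t) + a·t^{d−2} + b·t has exactly one real root. -/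
open Polynomial Filter

lemma aux_bdd (Q : Polynomial ℝ) (h0 : Q.natDegree ≠ 0) (heven : Even Q.natDegree)
    (hlc : 0 < Q.leadingCoeff) : ∃ M : ℝ, 0 ≤ M ∧ ∀ t : ℝ, -M ≤ Q.eval t := by
  have hdegpos : 0 < Q.degree := natDegree_pos_iff_degree_pos.mp (Nat.pos_of_ne_zero h0)
  have h1 : Tendsto (fun x => Q.eval x) atTop atTop :=
    Q.tendsto_atTop_of_leadingCoeff_nonneg hdegpos hlc.le
  set R := Q.comp (-X : Polynomial ℝ) with hR
  have hXdeg : (-X : Polynomial ℝ).natDegree = 1 := by simp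
  have hRnd : R.natDegree = Q.natDegree := by
    rw [hR, natDegree_comp, hXdeg, mul_one]
  have hRlc : R.leadingCoeff = Q.leadingCoeff := by
    rw [hR, Polynomial.leadingCoeff_comp (by rw [hXdeg]; omega)]
    simp [heven.neg_one_pow]
  have hRdegpos : 0 < R.degree := by
    apply natDegree_pos_iff_degree_pos.mp
    rw [hRnd]; exact Nat.pos_of_ne_zero h0
  have h2 : Tendsto (fun x => R.eval x) atTop atTop :=
    R.tendsto_atTop_of_leadingCoeff_nonneg hRdegpos (hRlc ▸ hlc.le)
  have hRe : ∀ x : ℝ, R.eval x = Q.eval (-x) := fun x => by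
    simp [hR, eval_comp]
  obtain ⟨x₀, hx₀⟩ := eventually_atTop.mp (h1.eventually_ge_atTop 0)
  obtain ⟨x₁, hx₁⟩ := eventually_atTop.mp (h2.eventually_ge_atTop 0)
  set a := min (-x₁) 0 with ha
  set b := max x₀ 0 with hb
  have hab : a ≤ b := le_trans (min_le_right _ _) (le_max_right _ _)
  obtain ⟨tm, htm, htmin⟩ := (isCompact_Icc : IsCompact (Set.Icc a b)).exists_isMinOn
    ⟨a, by simp [hab]⟩ (Q.continuous).continuousOn
  refine ⟨max (-(Q.eval tm)) 0, le_max_right _ _, fun t => ?_⟩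
  by_cases ht : t ∈ Set.Icc a b
  · have h3 : Q.eval tm ≤ Q.eval t := htmin ht
    have h4 := le_max_left (-(Q.eval tm)) 0
    linarith
  · have h5 : 0 ≤ Q.eval t := by
      simp only [Set.mem_Icc, not_and_or, not_le] at ht
      rcases ht with ht | ht
      · have : x₁ ≤ -t := by
          have := min_le_left (-x₁) 0; rw [← ha] at this; linarith
        have := hx₁ (-t) this
        rw [hRe] at this; simpa using this
      · exact hx₀ t (le_trans (le_max_left _ _) (by rw [← hb] at *; linarith))
    have := le_max_right (-(Q.eval tm)) 0
    linarith

/-- **Lemma (controlling real roots by adding large even/odd perturbations).**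
Let `P ∈ ℝ[t]` be monic with `deg P = d ≥ 3` and `P(0) = 1`.  Then there is `A₀ > 0` such that
for all `a, b ≥ A₀`: if `d` is even then `P(t) + a t^{d−2} + b t²` has no real roots, and if `d`
is odd then `P(t) + a t^{d−2} + b t` has exactly one real root. -/
theorem stmt19 (d : ℕ) (hd : 3 ≤ d) (P : Polynomial ℝ) (hmonic : P.Monic)
    (hdeg : P.natDegree = d) (hP0 : P.eval 0 = 1) :
    ∃ A₀ : ℝ, 0 < A₀ ∧ ∀ a b : ℝ, A₀ ≤ a → A₀ ≤ b →
      (Even d →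
        ∀ t : ℝ, (P + Polynomial.C a * Polynomial.X ^ (d - 2) +
          Polynomial.C b * Polynomial.X ^ 2).eval t ≠ 0) ∧
      (Odd d →
        ∃! t : ℝ, (P + Polynomial.C a * Polynomial.X ^ (d - 2) +
          Polynomial.C b * Polynomial.X).eval t = 0) := by
  have hPdeg : P.degree = (d : WithBot ℕ) := by
    rw [degree_eq_natDegree hmonic.ne_zero, hdeg]
  rcases Nat.even_or_odd d with hEd | hOd
  · -- even case
    obtain ⟨M, hM0, hM⟩ := aux_bdd P (by omega) (hdeg ▸ hEd)
      (by rw [hmonic.leadingCoeff]; norm_num)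
    -- continuity at 0
    have hU : IsOpen {t : ℝ | (1:ℝ)/2 < P.eval t} :=
      isOpen_lt continuous_const P.continuous
    have h0U : (0:ℝ) ∈ {t : ℝ | (1:ℝ)/2 < P.eval t} := by
      simp [hP0]; norm_num
    obtain ⟨δ, hδ0, hδ⟩ := Metric.mem_nhds_iff.mp (hU.mem_nhds h0U)
    refine ⟨max ((M+1)/δ^2) 1, lt_of_lt_of_le one_pos (le_max_right _ _), ?_⟩
    intro a b ha hb
    have ha1 : (1:ℝ) ≤ a := le_trans (le_max_right _ _) ha
    have hb1 : (1:ℝ) ≤ b := le_trans (le_max_right _ _) hb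
    have hbM : (M+1)/δ^2 ≤ b := le_trans (le_max_left _ _) hb
    have hEd2 : Even (d - 2) := by
      rw [Nat.even_sub (by omega)]; simp [hEd]
    -- by rw [Nat.even_sub (by omega)]; simp [hEd]
    constructor
    · intro _ t
      have heval : (P + C a * X ^ (d - 2) + C b * X ^ 2).eval t
          = P.eval t + a * t ^ (d - 2) + b * t ^ 2 := by simp
      rw [heval]
      have h1 : 0 ≤ a * t ^ (d - 2) :=
        mul_nonneg (by linarith) (hEd2.pow_nonneg t)
      by_cases hts : |t| < δ
      · have hPt : (1:ℝ)/2 < P.eval t := by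
          have : t ∈ Metric.ball (0:ℝ) δ := by
            simpa [Real.dist_eq] using hts
          exact hδ this
        have h2 : 0 ≤ b * t ^ 2 := mul_nonneg (by linarith) (sq_nonneg t)
        intro hzero
        nlinarith
      · push_neg at hts
        have hPt : -M ≤ P.eval t := hM t
        have ht2 : δ^2 ≤ t^2 := by
          have := sq_abs t
          nlinarith [abs_nonneg t]
        have hb2 : M + 1 ≤ b * t ^ 2 := by
          have hb0 : (0:ℝ) < b := by linarith
          have : (M+1)/δ^2 * δ^2 ≤ b * t^2 := by
            apply mul_le_mul hbM ht2 (by positivity) (by linarith)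
          rwa [div_mul_cancel₀] at this
          positivity
        intro hzero
        nlinarith
    · intro hodd
      have h1 := Nat.even_iff.mp hEd
      have h2 := Nat.odd_iff.mp hodd
      omega
  · -- odd case
    have hc1 : P.coeff d = 1 := by rw [← hdeg]; exact hmonic.coeff_natDegree
    have hcoeff : P.derivative.coeff (d - 1) = (d : ℝ) := by
      have hd1 : d - 1 + 1 = d := by omega
      rw [coeff_derivative, hd1, hc1, one_mul]
      push_cast [Nat.cast_sub (by omega : 1 ≤ d)]
      ring
    have hD1 : P.derivative.natDegree = d - 1 := by
      refine le_antisymm ?_ ?_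
      · simpa [hdeg] using natDegree_derivative_le P
      · apply le_natDegree_of_ne_zero
        rw [hcoeff]
        exact_mod_cast (by omega : d ≠ 0)
    have hDlc : P.derivative.leadingCoeff = (d : ℝ) := by
      rw [Polynomial.leadingCoeff, hD1, hcoeff]
    have hEd1 : Even (d - 1) := (Nat.even_sub' (by omega)).mpr ⟨fun _ => odd_one, fun _ => hOd⟩
    obtain ⟨M, hM0, hM⟩ := aux_bdd P.derivative (by omega) (hD1 ▸ hEd1)
      (by rw [hDlc]; exact_mod_cast (by omega : 0 < d))
    refine ⟨M + 1, by linarith, ?_⟩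
    intro a b ha hb
    constructor
    · intro hEv
      have h1 := Nat.even_iff.mp hEv
      have h2 := Nat.odd_iff.mp hOd
      omega
    intro _
    set Q := P + C a * X ^ (d - 2) + C b * X with hQdef
    have hdC1 : (C a * X ^ (d - 2) : Polynomial ℝ).degree < P.degree := by
      apply lt_of_le_of_lt (degree_C_mul_X_pow_le _ _)
      rw [hPdeg]
      exact_mod_cast (by omega : d - 2 < d)
    have hQ1 : (P + C a * X ^ (d - 2)).Monic := hmonic.add_of_left hdC1
    have hdeg1 : (P + C a * X ^ (d - 2)).degree = (d : WithBot ℕ) := by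
      rw [degree_add_eq_left_of_degree_lt hdC1, hPdeg]
    have hdC2 : (C b * X : Polynomial ℝ).degree < (P + C a * X ^ (d - 2)).degree := by
      rw [hdeg1]
      apply lt_of_le_of_lt (degree_C_mul_X_le _)
      exact_mod_cast (by omega : 1 < d)
    have hQmon : Q.Monic := hQ1.add_of_left hdC2
    have hQdeg : Q.degree = (d : WithBot ℕ) := by
      rw [hQdef, degree_add_eq_left_of_degree_lt hdC2, hdeg1]
    have hQnd : Q.natDegree = d := natDegree_eq_of_degree_eq_some hQdeg
    have hQdegpos : 0 < Q.degree := by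
      rw [hQdeg]
      exact_mod_cast (by omega : 0 < d)
    have hder : ∀ t : ℝ, Q.derivative.eval t
        = P.derivative.eval t + a * (((d - 2 : ℕ) : ℝ) * t ^ (d - 3)) + b := by
      intro t
      have h231 : d - 2 - 1 = d - 3 := by omega
      simp [hQdef, derivative_add, derivative_C_mul, derivative_X_pow, h231]
    have hEd3 : Even (d - 3) := (Nat.even_sub' (by omega)).mpr
      ⟨fun _ => by decide, fun _ => hOd⟩
    have hmono : StrictMono (fun t : ℝ => Q.eval t) := by
      apply strictMono_of_deriv_pos
      intro t
      rw [Polynomial.deriv, hder t]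
      have h1 : 0 ≤ a * (((d - 2 : ℕ) : ℝ) * t ^ (d - 3)) :=
        mul_nonneg (by linarith) (mul_nonneg (by positivity) (hEd3.pow_nonneg t))
      have h2 := hM t
      linarith
    have htop : Tendsto (fun x => Q.eval x) atTop atTop :=
      Q.tendsto_atTop_of_leadingCoeff_nonneg hQdegpos (by rw [hQmon.leadingCoeff]; norm_num)
    set R := Q.comp (-X : Polynomial ℝ) with hRdef
    have hRnd : R.natDegree = Q.natDegree := by
      rw [hRdef, natDegree_comp]; simp
    have hRlc : R.leadingCoeff = -1 := by
      rw [hRdef, Polynomial.leadingCoeff_comp (by simp)]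
      simp [hQmon.leadingCoeff, hQnd, hOd.neg_one_pow]
    have hRdegpos : 0 < R.degree :=
      natDegree_pos_iff_degree_pos.mp (by rw [hRnd, hQnd]; omega)
    have hbot : Tendsto (fun x => R.eval x) atTop atBot :=
      R.tendsto_atBot_of_leadingCoeff_nonpos hRdegpos (by rw [hRlc]; norm_num)
    obtain ⟨u, hu⟩ := (htop.eventually_ge_atTop 1).exists
    obtain ⟨v', hv'⟩ := (hbot.eventually_le_atBot (-1)).exists
    have hv : Q.eval (-v') ≤ -1 := by
      rw [hRdef] at hv'
      simpa [eval_comp] using hv'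
    have hsub := intermediate_value_univ (-v') u (Q.continuous)
    have h0mem : (0:ℝ) ∈ Set.Icc (Q.eval (-v')) (Q.eval u) := ⟨by linarith, by linarith⟩
    obtain ⟨t0, ht0⟩ := hsub h0mem
    refine ⟨t0, ht0, fun y hy => hmono.injective ?_⟩
    show Q.eval y = Q.eval t0
    rw [hy]
    exact ht0.symm
end
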